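/- arXiv:1502.01183 — 2 statements merged into one kernel-verified Lean document; each statement's English description precedes it below -/
import Mathlib

section
/- Let M be a nonempty shifted multicomplex on W_r consisting of monomials of degree at most a (a ≥ 2). Then the simplicial complex Φ^{a−1}(C^a_{r+1}M) on [r+a] equals the (a−2)-skeleton of Φ^a(M), i.e. the subcomplex of Φ^a(M) consisting of all its faces of dimension at most a−2. -/
open Finset

noncomputable section

/-- The largest `a` with `C(a,ℓ) ≤ p` (searched within a sufficient bound). -/
def largestBinom (ℓ p : ℕ) : ℕ :=
  Nat.findGreatest (fun a => Nat.choose a ℓ ≤ p) (p + ℓ)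

/-- The Macaulay lower shadow `∂^ℓ(p)`, computed from the `ℓ`-representation
`p = C(a_ℓ,ℓ) + ⋯ + C(a_e,e)` via the greedy algorithm; `∂^ℓ(0) = 0`. -/
def mshadow : ℕ → ℕ → ℕ
  | 0, _ => 0
  | (ℓ+1), p =>
    if p = 0 then 0
    else Nat.choose (largestBinom (ℓ+1) p - 1) ℓ +
      mshadow ℓ (p - Nat.choose (largestBinom (ℓ+1) p) (ℓ+1))

/-- `(f 0, f 1, …, f d)` is an M-sequence (of nonnegative integers):
`f 0 = 1` and `∂^ℓ(f ℓ) ≤ f (ℓ-1)` for `1 ≤ ℓ ≤ d`. -/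
def IsMSeqI (f : ℕ → ℤ) (d : ℕ) : Prop :=
  f 0 = 1 ∧ (∀ ℓ ≤ d, 0 ≤ f ℓ) ∧
    ∀ ℓ, 1 ≤ ℓ → ℓ ≤ d → (mshadow ℓ (f ℓ).toNat : ℤ) ≤ f (ℓ - 1)

/-- A simplicial complex on `[n]`: a family of subsets closed under taking subsets. -/
def IsCplx {n : ℕ} (Δ : Set (Finset (Fin n))) : Prop :=
  ∀ F ∈ Δ, ∀ G, G ⊆ F → G ∈ Δ

/-- A shifted family on `[n]`: replacing a smaller element by a larger one stays in the family. -/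
def ShiftedCplx {n : ℕ} (Δ : Set (Finset (Fin n))) : Prop :=
  ∀ F ∈ Δ, ∀ r s : Fin n, r < s → r ∈ F → s ∉ F → insert s (F.erase r) ∈ Δ

/-- `F` is a facet (inclusion-maximal member) of `Δ`. -/
def IsFacet {n : ℕ} (Δ : Set (Finset (Fin n))) (F : Finset (Fin n)) : Prop :=
  F ∈ Δ ∧ ∀ G ∈ Δ, F ⊆ G → F = G

/-- `fvec Δ i` is the number of faces of cardinality `i` (that is, `f_{i-1}`). -/
def fvec {n : ℕ} (Δ : Set (Finset (Fin n))) (i : ℕ) : ℕ :=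
  {F ∈ Δ | F.card = i}.ncard

/-- The `h`-vector of a `(d-1)`-complex, defined by
`Σ h_j y^j = Σ f_{i-1} (1-y)^{d-i} y^i`, i.e. `h_j = Σ_{i≤j} (-1)^{j-i} C(d-i, j-i) f_{i-1}`. -/
def hvec {n : ℕ} (d : ℕ) (Δ : Set (Finset (Fin n))) (j : ℕ) : ℤ :=
  ∑ i ∈ Finset.range (j + 1),
    (-1 : ℤ) ^ (j - i) * (Nat.choose (d - i) (j - i) : ℤ) * (fvec Δ i : ℤ)

/-- The pure skeleton of `Δ` whose facets are the faces of cardinality `c`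
(the pure `(c-1)`-skeleton `Δ^[c-1]`). -/
def pureSkel {n : ℕ} (Δ : Set (Finset (Fin n))) (c : ℕ) : Set (Finset (Fin n)) :=
  {G | ∃ F ∈ Δ, F.card = c ∧ G ⊆ F}

/-- The `h̃`-triangle: `h̃_{i,j} = h_j(Δ^[i-1])`. -/
def htilde {n : ℕ} (Δ : Set (Finset (Fin n))) (i j : ℕ) : ℤ :=
  hvec i (pureSkel Δ i) j

/-- The `h`-triangle: `h_{i,j} = h̃_{i,j} - Σ_{ℓ≤j} h̃_{i+1,ℓ}`. -/
def htri {n : ℕ} (Δ : Set (Finset (Fin n))) (i j : ℕ) : ℤ :=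
  htilde Δ i j - ∑ ℓ ∈ Finset.range (j + 1), htilde Δ (i + 1) ℓ

/-- `σ(F)`: the longest terminal segment `{s, s+1, …, n}` contained in `F`
(empty if the last vertex is not in `F`). -/
def sigmaSeg {n : ℕ} (F : Finset (Fin n)) : Finset (Fin n) :=
  Finset.univ.filter (fun k => ∀ l, k ≤ l → l ∈ F)

/-- The degree of a monomial, given by its exponent vector. -/
def degM {k : ℕ} (m : Fin k → ℕ) : ℕ := ∑ i, m i

/-- The monomial `m` only involves the first `r` variables `w_1, …, w_r`. -/
def SupportedOn {k : ℕ} (r : ℕ) (m : Fin k → ℕ) : Prop :=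
  ∀ i : Fin k, r ≤ (i : ℕ) → m i = 0

/-- A multicomplex: a set of monomials closed under divisibility. -/
def IsMulticx {k : ℕ} (M : Set (Fin k → ℕ)) : Prop :=
  ∀ m ∈ M, ∀ m' : Fin k → ℕ, (∀ i, m' i ≤ m i) → m' ∈ M

/-- The monomial `w_j ⬝ (m / w_i)`. -/
def shiftMove {k : ℕ} (m : Fin k → ℕ) (i j : Fin k) : Fin k → ℕ :=
  fun t => if t = i then m i - 1 else if t = j then m j + 1 else m t

/-- A shifted multicomplex (on the first `r` variables). -/
def ShiftedMC {k : ℕ} (r : ℕ) (M : Set (Fin k → ℕ)) : Prop :=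
  ∀ m ∈ M, ∀ i j : Fin k, i < j → (j : ℕ) < r → 0 < m i → shiftMove m i j ∈ M

/-- Viewing `F` as the set of north-step positions of a lattice path, `xcoordS F p` is the
x-coordinate of the step at position `p`, i.e. the number of east steps strictly before `p`. -/
def xcoordS {k : ℕ} (F : Finset (Fin k)) (p : Fin k) : ℕ :=
  (Finset.univ.filter (fun j => j < p ∧ j ∉ F)).card

/-- `ψ = λ ∘ ν⁻¹` : the monomial on `W_r` associated to an `a`-subset `F` of `[r+a]`;
the exponent of `w_{i+1}` is the number of north steps with x-coordinate `i`. -/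
def psiM (r : ℕ) {k : ℕ} (F : Finset (Fin k)) : Fin k → ℕ :=
  fun i => if (i : ℕ) < r then (F.filter (fun p => xcoordS F p = (i : ℕ))).card else 0

/-- The partial sum `m_1 + ⋯ + m_i` of exponents strictly before position `i`. -/
def psum {k : ℕ} (m : Fin k → ℕ) (i : Fin k) : ℕ :=
  ∑ j ∈ Finset.univ.filter (fun j => j < i), m j

/-- `φ = ν ∘ λ⁻¹` : the set of north-step positions of the lattice path associated to a
monomial `m` on the first `r` variables (the remaining north steps lie in the last column). -/
def phiM (r : ℕ) {k : ℕ} (m : Fin k → ℕ) : Finset (Fin k) :=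
  Finset.univ.filter (fun p =>
    (∃ i : Fin k, (i : ℕ) < r ∧ psum m i + (i : ℕ) ≤ (p : ℕ) ∧
        (p : ℕ) < psum m i + m i + (i : ℕ)) ∨
    degM m + r ≤ (p : ℕ))

/-- The `a`-cone of `M` in the variable with (0-indexed) index `t`:
`{ w_{t+1}^ℓ · m : m ∈ M, deg m + ℓ < a }`. -/
def coneMC {k : ℕ} (t a : ℕ) (M : Set (Fin k → ℕ)) : Set (Fin k → ℕ) :=
  {p | ∃ m ∈ M, ∃ ℓ : ℕ, degM m + ℓ < a ∧
    p = fun i : Fin k => if (i : ℕ) = t then m i + ℓ else m i}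

/-- `Φ(M)`: the simplicial complex whose facets are the sets `φ(m)`, `m ∈ M`. -/
def PhiCplx (r : ℕ) {k : ℕ} (M : Set (Fin k → ℕ)) : Set (Finset (Fin k)) :=
  {G | ∃ m ∈ M, G ⊆ phiM r m}

/-- A `d`-metacomplex on `n`: a sequence of multicomplexes `M^[i]` on `{w_1,…,w_{n-i}}`
of degree `≤ i` with `C^i M^[i] ⊆ M^[i-1]`. -/
def IsMeta (n d : ℕ) (M : ℕ → Set (Fin n → ℕ)) : Prop :=
  (∀ i ≤ d, IsMulticx (M i) ∧ ∀ m ∈ M i, SupportedOn (n - i) m ∧ degM m ≤ i) ∧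
  (∀ i, 1 ≤ i → i ≤ d → coneMC (n - i) i (M i) ⊆ M (i - 1))

/-- A metacomplex is shifted if all its multicomplexes are. -/
def ShiftedMeta (n d : ℕ) (M : ℕ → Set (Fin n → ℕ)) : Prop :=
  ∀ i ≤ d, ShiftedMC (n - i) (M i)

/-- The `f`-triangle of a metacomplex: `f_{i,j}` = number of degree-`j` monomials in `M^[i]`. -/
def ftri (n : ℕ) (M : ℕ → Set (Fin n → ℕ)) (i j : ℕ) : ℕ :=
  {m ∈ M i | degM m = j}.ncard

/-- `Φ̄(𝓜) = ⋃_{i≤d} {φ^i(m) : m ∈ M^[i]}`. -/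
def PhiBar (n d : ℕ) (M : ℕ → Set (Fin n → ℕ)) : Set (Finset (Fin n)) :=
  {F | ∃ i ≤ d, ∃ m ∈ M i, F = phiM (n - i) m}

/-- `Ψ̄(Δ)`: the metacomplex with `M^[i] = {ψ(F) : F ∈ Δ, |F| = i}`. -/
def PsiBar (n : ℕ) (Δ : Set (Finset (Fin n))) : ℕ → Set (Fin n → ℕ) :=
  fun i => {p | ∃ F ∈ Δ, F.card = i ∧ p = psiM (n - i) F}

/-- The (finite) set of all monomials of degree `≤ t` in the variables `u_1, …, u_s`. -/
def monos (s t : ℕ) : Finset (Fin s → ℕ) :=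
  ((Finset.univ : Finset (Fin s → Fin (t + 1))).image
      (fun f => fun i => ((f i : ℕ)))).filter (fun m => degM m ≤ t)

/-- An `M_{s,t}`-array: a positive-integer valued function on monomials of degree `≤ t`
in `u_1,…,u_s` satisfying conditions (1)–(3) of Definition 4.1. -/
def IsMArray (s t : ℕ) (q : (Fin s → ℕ) → ℕ) : Prop :=
  (∀ m, degM m ≤ t → 0 < q m) ∧
  (∀ m, degM m ≤ t → ∀ i j : Fin s, i < j → 0 < m i → q m ≤ q (shiftMove m i j)) ∧
  (∀ m, degM m = t → q m = 1) ∧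
  (∀ m, degM m < t → ∀ j : Fin s,
    mshadow (t - degM m) (q m) ≤ q (fun x => if x = j then m x + 1 else m x))

/-- An `M_{s,t}(h)`-composition of `r`: an `M_{s,t}`-array with `q^m ≥ h_{t - deg m}`
and `Σ_m q^m = r`. -/
def IsComposition (s t : ℕ) (h : ℕ → ℤ) (r : ℤ) (q : (Fin s → ℕ) → ℕ) : Prop :=
  IsMArray s t q ∧ (∀ m, degM m ≤ t → h (t - degM m) ≤ (q m : ℤ)) ∧
  (∑ m ∈ monos s t, (q m : ℤ)) = r

/-- `Σ_s 𝒟`: the sum of the `q^m` over monomials divisible by the last variable `u_s`. -/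
def SigmaLast (s t : ℕ) (q : (Fin s → ℕ) → ℕ) : ℕ :=
  ∑ m ∈ (monos s t).filter (fun m => ∃ i : Fin s, (i : ℕ) = s - 1 ∧ 0 < m i), q m

/-- `ρ_{s,t}(r;h) = min { Σ_s 𝒟 : 𝒟 an M_{s,t}(h)-composition of r }`. -/
def rho (s t : ℕ) (h : ℕ → ℤ) (r : ℤ) : ℕ :=
  sInf {v : ℕ | ∃ q, IsComposition s t h r q ∧ SigmaLast s t q = v}

/-- A minimal non-face of `Δ`. -/
def IsMinNonface {n : ℕ} (Δ : Set (Finset (Fin n))) (G : Finset (Fin n)) : Prop :=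
  G ∉ Δ ∧ ∀ G' ⊂ G, G' ∈ Δ

/-- The Alexander dual `Δ* = {F : [n]∖F ∉ Δ}`. -/
def dualCplx {n : ℕ} (Δ : Set (Finset (Fin n))) : Set (Finset (Fin n)) :=
  {F | Fᶜ ∉ Δ}

/-- `m_{ℓ,k}(Δ)`: the number of minimal non-faces `G` of `Δ` with `|G| = k` and
`max G = ℓ + k - 1` (vertices labelled `1, …, n`). -/
def mGen {n : ℕ} (Δ : Set (Finset (Fin n))) (ℓ k : ℕ) : ℕ :=
  {G : Finset (Fin n) | IsMinNonface Δ G ∧ G.card = k ∧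
    (∃ v ∈ G, (v : ℕ) + 1 = ℓ + k - 1) ∧ ∀ u ∈ G, (u : ℕ) + 1 ≤ ℓ + k - 1}.ncard

/-- `μ_{ℓ,k}(Δ)` (written `muGen Δ k ℓ`), defined by the recursion
`m_{ℓ,k} = μ_{ℓ,k} − Σ_{q=1}^{ℓ} μ_{q,k−1}`. -/
def muGen {n : ℕ} (Δ : Set (Finset (Fin n))) : ℕ → ℕ → ℤ
  | 0, ℓ => (mGen Δ ℓ 0 : ℤ)
  | (k+1), ℓ => (mGen Δ ℓ (k+1) : ℤ) + ∑ q ∈ Finset.Icc 1 ℓ, muGen Δ k q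

/-- A lattice path from `(0,0)` to `(n-a, a)`, as a word in `{N, E}` of length `n`
with exactly `a` letters `N` (`true` = north). -/
def NPath (n a : ℕ) : Type :=
  {L : Fin n → Bool // (Finset.univ.filter (fun i => L i = true)).card = a}

/-- `ν(L)`: the set of positions of the north steps of `L`. -/
def nuP {n a : ℕ} (L : NPath n a) : Finset (Fin n) :=
  Finset.univ.filter (fun i => L.1 i = true)

/-- The height of the path after step `p` (number of north steps at positions `≤ p`). -/
def heightAt {n a : ℕ} (L : NPath n a) (p : Fin n) : ℕ :=
  (Finset.univ.filter (fun i => i ≤ p ∧ L.1 i = true)).card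

/-- `L ≤ L'` iff `L` never goes above `L'`. -/
def PathLe {n a : ℕ} (L L' : NPath n a) : Prop :=
  ∀ p : Fin n, heightAt L p ≤ heightAt L' p

/-- An order ideal of the poset `𝓛_{r,a}` of lattice paths. -/
def IsOrderIdealP {n a : ℕ} (Q : Set (NPath n a)) : Prop :=
  ∀ L ∈ Q, ∀ L', PathLe L' L → L' ∈ Q

/-- The x-coordinate of the step of `L` at position `p`. -/
def xcoordP {n a : ℕ} (L : NPath n a) (p : Fin n) : ℕ :=
  (Finset.univ.filter (fun j => j < p ∧ L.1 j = false)).card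

/-- `λ(L)`: the monomial `∏ w_i^{λ_i(L)}`, where `λ_i(L)` is the number of north steps
of `L` with x-coordinate `i - 1`. -/
def lamP (r : ℕ) {n a : ℕ} (L : NPath n a) : Fin n → ℕ :=
  fun i => if (i : ℕ) < r then
    (Finset.univ.filter (fun p => L.1 p = true ∧ xcoordP L p = (i : ℕ))).card
  else 0


namespace PhiAux

variable {k : ℕ}

/-- Partial sum of the first `t` exponents. -/
def S (m : Fin k → ℕ) (t : ℕ) : ℕ :=
  ∑ j ∈ Finset.univ.filter (fun j : Fin k => (j : ℕ) < t), m j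

lemma S_zero (m : Fin k → ℕ) : S m 0 = 0 := by
  unfold S
  rw [Finset.sum_eq_zero_iff.mpr]
  intro j hj
  simp at hj

lemma S_succ (m : Fin k → ℕ) (t : ℕ) (h : t < k) :
    S m (t + 1) = m ⟨t, h⟩ + S m t := by
  unfold S
  rw [← Finset.sum_insert (s := Finset.univ.filter (fun j : Fin k => (j : ℕ) < t))
      (by simp)]
  congr 1
  ext j
  simp only [Finset.mem_insert, Finset.mem_filter, Finset.mem_univ, true_and, Fin.ext_iff]
  omega

lemma S_mono (m : Fin k → ℕ) {s t : ℕ} (h : s ≤ t) : S m s ≤ S m t := by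
  apply Finset.sum_le_sum_of_subset
  intro j hj
  simp only [Finset.mem_filter, Finset.mem_univ, true_and] at *
  omega

lemma S_le_deg (m : Fin k → ℕ) (t : ℕ) : S m t ≤ degM m := by
  unfold S degM
  exact Finset.sum_le_sum_of_subset (Finset.filter_subset _ _)

lemma S_eq_deg {r : ℕ} {m : Fin k → ℕ} (hs : SupportedOn r m) {t : ℕ} (ht : r ≤ t) :
    S m t = degM m := by
  unfold S degM
  rw [← Finset.sum_filter_add_sum_filter_not Finset.univ (fun j : Fin k => (j : ℕ) < t) m]
  have : ∑ j ∈ Finset.univ.filter (fun j : Fin k => ¬ (j : ℕ) < t), m j = 0 := by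
    apply Finset.sum_eq_zero
    intro j hj
    simp only [Finset.mem_filter, Finset.mem_univ, true_and, not_lt] at hj
    exact hs j (le_trans ht hj)
  omega

lemma psum_eq (m : Fin k → ℕ) (i : Fin k) : psum m i = S m (i : ℕ) := by
  unfold psum S
  apply Finset.sum_congr _ (fun _ _ => rfl)
  apply Finset.filter_congr
  intro j _
  exact Iff.rfl

lemma card_filter_lt {c : ℕ} (hc : c ≤ k) :
    (Finset.univ.filter (fun p : Fin k => (p : ℕ) < c)).card = c := by
  have : Finset.univ.filter (fun p : Fin k => (p : ℕ) < c)
      = (Finset.univ : Finset (Fin c)).image (Fin.castLE hc) := by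
    ext p
    simp only [Finset.mem_filter, Finset.mem_univ, true_and, Finset.mem_image]
    constructor
    · intro hp; exact ⟨⟨(p : ℕ), hp⟩, by ext; rfl⟩
    · rintro ⟨q, -, rfl⟩
      exact q.isLt
  rw [this, Finset.card_image_of_injective _ (Fin.castLE_injective hc)]
  simp

lemma card_filter_lt_le (c : ℕ) :
    (Finset.univ.filter (fun p : Fin k => (p : ℕ) < c)).card ≤ c := by
  rcases le_or_gt c k with hc | hc
  · exact le_of_eq (card_filter_lt hc)
  · calc (Finset.univ.filter (fun p : Fin k => (p : ℕ) < c)).card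
        ≤ (Finset.univ : Finset (Fin k)).card :=
          Finset.card_le_card (Finset.filter_subset _ _)
      _ = k := by simp
      _ ≤ c := by omega

/-- Membership characterization: `p ∈ φ(m)` iff `p` avoids the east-step positions. -/
lemma mem_phiM_iff {r : ℕ} (hrk : r ≤ k) (m : Fin k → ℕ) (hs : SupportedOn r m) (p : Fin k) :
    p ∈ phiM r m ↔ ∀ i < r, (p : ℕ) ≠ S m (i + 1) + i := by
  unfold phiM
  simp only [Finset.mem_filter, Finset.mem_univ, true_and]
  constructor
  · rintro (⟨i, hir, h1, h2⟩ | hp) j hj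
    · rw [psum_eq] at h1 h2
      have hsucc : S m ((i : ℕ) + 1) = m i + S m (i : ℕ) := by
        rw [S_succ m (i : ℕ) i.isLt, Fin.eta]
      rcases Nat.lt_or_ge j (i : ℕ) with h | h
      · have : S m (j + 1) ≤ S m (i : ℕ) := S_mono m (by omega)
        omega
      · have : S m ((i : ℕ) + 1) ≤ S m (j + 1) := S_mono m (by omega)
        omega
    · have : S m (j + 1) ≤ degM m := S_le_deg m (j + 1)
      omega
  · intro h
    by_cases hp : degM m + r ≤ (p : ℕ)
    · right; exact hp
    · left
      push_neg at hp
      have key : ∀ t, t ≤ r → (p : ℕ) < S m t + t →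
          ∃ i : Fin k, (i : ℕ) < r ∧ psum m i + (i : ℕ) ≤ (p : ℕ) ∧
            (p : ℕ) < psum m i + m i + (i : ℕ) := by
        intro t
        induction t with
        | zero => intro _ h0; rw [S_zero] at h0; omega
        | succ t ih =>
          intro htr hlt
          have htk : t < k := lt_of_lt_of_le htr hrk
          by_cases hge : S m t + t ≤ (p : ℕ)
          · refine ⟨⟨t, htk⟩, htr, ?_, ?_⟩
            · rw [psum_eq]; exact hge
            · rw [psum_eq]
              have hne := h t htr
              have hsucc : S m (t + 1) = m ⟨t, htk⟩ + S m t := S_succ m t htk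
              simp only [Fin.val_mk] at *
              omega
          · exact ih (by omega) (by omega)
      apply key r le_rfl
      rw [S_eq_deg hs le_rfl]
      omega

lemma card_phiM {r : ℕ} (m : Fin k → ℕ) (hs : SupportedOn r m) (hd : degM m + r ≤ k) :
    (phiM r m).card = k - r := by
  classical
  have hrk : r ≤ k := by omega
  have hbd : ∀ j : Fin r, S m ((j : ℕ) + 1) + (j : ℕ) < k := by
    intro j
    have := S_le_deg m ((j : ℕ) + 1)
    have := j.isLt
    omega
  set f : Fin r → Fin k := fun j => ⟨S m ((j : ℕ) + 1) + (j : ℕ), hbd j⟩ with hf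
  have hcompl : (phiM r m)ᶜ = Finset.univ.image f := by
    ext p
    simp only [Finset.mem_compl, Finset.mem_image, Finset.mem_univ, true_and]
    rw [mem_phiM_iff hrk m hs]
    push_neg
    constructor
    · rintro ⟨i, hir, hpe⟩
      exact ⟨⟨i, hir⟩, by ext; simp [hf, hpe]⟩
    · rintro ⟨j, rfl⟩
      exact ⟨(j : ℕ), j.isLt, rfl⟩
  have hinj : Function.Injective f := by
    intro i j hij
    have : ((f i : Fin k) : ℕ) = ((f j : Fin k) : ℕ) := by rw [hij]
    simp only [hf] at this
    by_contra hne
    rcases Nat.lt_or_ge (i : ℕ) (j : ℕ) with h | h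
    · have := S_mono m (show (i : ℕ) + 1 ≤ (j : ℕ) + 1 by omega); omega
    · have hlt : (j : ℕ) < (i : ℕ) := by
        rcases Nat.lt_or_ge (j : ℕ) (i : ℕ) with h' | h'
        · exact h'
        · exact absurd (Fin.ext (by omega)) hne
      have := S_mono m (show (j : ℕ) + 1 ≤ (i : ℕ) + 1 by omega); omega
  have hcard : ((phiM r m)ᶜ : Finset (Fin k)).card = r := by
    rw [hcompl, Finset.card_image_of_injective _ hinj]
    simp
  have := Finset.card_compl (phiM r m)
  rw [hcard] at this
  have hle := Finset.card_le_univ (phiM r m)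
  simp only [Fintype.card_fin] at *
  omega

/-- The cone monomial. -/
def coneMon (r : ℕ) (m : Fin k → ℕ) (ℓ : ℕ) : Fin k → ℕ :=
  fun i : Fin k => if (i : ℕ) = r then m i + ℓ else m i

lemma coneMon_supported {r : ℕ} (m : Fin k → ℕ) (hs : SupportedOn r m) (ℓ : ℕ) :
    SupportedOn (r + 1) (coneMon r m ℓ) := by
  intro i hi
  unfold coneMon
  rw [if_neg (by omega)]
  exact hs i (by omega)

lemma S_coneMon {r : ℕ} (m : Fin k → ℕ) (ℓ : ℕ) {t : ℕ} (ht : t ≤ r) :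
    S (coneMon r m ℓ) t = S m t := by
  unfold S
  apply Finset.sum_congr rfl
  intro j hj
  simp only [Finset.mem_filter, Finset.mem_univ, true_and] at hj
  unfold coneMon
  rw [if_neg (by omega)]

lemma S_coneMon_succ {r : ℕ} (hrk : r < k) (m : Fin k → ℕ) (hs : SupportedOn r m) (ℓ : ℕ) :
    S (coneMon r m ℓ) (r + 1) = degM m + ℓ := by
  rw [S_succ _ r hrk, S_coneMon m ℓ le_rfl, S_eq_deg hs le_rfl]
  have h1 : coneMon r m ℓ ⟨r, hrk⟩ = m ⟨r, hrk⟩ + ℓ := by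
    unfold coneMon; rw [if_pos rfl]
  have h2 : m ⟨r, hrk⟩ = 0 := hs _ (by simp)
  omega

lemma degM_coneMon {r : ℕ} (hrk : r < k) (m : Fin k → ℕ) (hs : SupportedOn r m) (ℓ : ℕ) :
    degM (coneMon r m ℓ) = degM m + ℓ := by
  rw [← S_eq_deg (coneMon_supported m hs ℓ) (le_refl (r + 1)), S_coneMon_succ hrk m hs ℓ]

lemma mem_phiM_cone_iff {r : ℕ} (hrk : r + 1 ≤ k) (m : Fin k → ℕ) (hs : SupportedOn r m)
    (ℓ : ℕ) (p : Fin k) :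
    p ∈ phiM (r + 1) (coneMon r m ℓ) ↔
      p ∈ phiM r m ∧ (p : ℕ) ≠ degM m + ℓ + r := by
  rw [mem_phiM_iff hrk _ (coneMon_supported m hs ℓ), mem_phiM_iff (by omega) m hs]
  constructor
  · intro h
    refine ⟨fun i hi => ?_, ?_⟩
    · have := h i (by omega)
      rwa [S_coneMon m ℓ (by omega)] at this
    · have := h r (by omega)
      rwa [S_coneMon_succ (by omega) m hs ℓ] at this
  · rintro ⟨h1, h2⟩ i hi
    rcases Nat.lt_or_ge i r with h | h
    · rw [S_coneMon m ℓ (by omega)]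
      exact h1 i h
    · have : i = r := by omega
      subst this
      rw [S_coneMon_succ (by omega) m hs ℓ]
      exact h2


lemma val_eq_xcoord (G : Finset (Fin k)) (q : Fin k) :
    (q : ℕ) = xcoordS G q + (G.filter (fun j => j < q)).card := by
  classical
  unfold xcoordS
  have h1 : (Finset.univ.filter (fun j : Fin k => j < q)).card = (q : ℕ) := by
    have he : Finset.univ.filter (fun j : Fin k => j < q)
        = Finset.univ.filter (fun j : Fin k => (j : ℕ) < (q : ℕ)) := by
      apply Finset.filter_congr; intro j _; exact Iff.rfl
    rw [he, card_filter_lt (le_of_lt q.isLt)]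
  have h2 : Finset.univ.filter (fun j : Fin k => j < q)
      = (Finset.univ.filter (fun j : Fin k => j < q ∧ j ∉ G)) ∪
        (G.filter (fun j => j < q)) := by
    ext j
    simp only [Finset.mem_filter, Finset.mem_union, Finset.mem_univ, true_and]
    by_cases hj : j ∈ G <;> tauto
  have hd : Disjoint (Finset.univ.filter (fun j : Fin k => j < q ∧ j ∉ G))
      (G.filter (fun j => j < q)) := by
    rw [Finset.disjoint_left]
    intro j hj1 hj2
    simp only [Finset.mem_filter, Finset.mem_univ, true_and] at hj1 hj2
    exact hj1.2 hj2.1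
  rw [← h1, h2, Finset.card_union_of_disjoint hd]

lemma xcoord_mono (G : Finset (Fin k)) {q q' : Fin k} (h : q ≤ q') :
    xcoordS G q ≤ xcoordS G q' := by
  unfold xcoordS
  apply Finset.card_le_card
  intro j hj
  simp only [Finset.mem_filter, Finset.mem_univ, true_and] at *
  exact ⟨lt_of_lt_of_le hj.1 h, hj.2⟩

/-- The monomial extracted from a face `G`. -/
def mOf (r : ℕ) (G : Finset (Fin k)) : Fin k → ℕ :=
  fun i => if (i : ℕ) < r then (G.filter (fun p => xcoordS G p = (i : ℕ))).card else 0

lemma mOf_supported (r : ℕ) (G : Finset (Fin k)) : SupportedOn r (mOf r G) := by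
  intro i hi; unfold mOf; rw [if_neg (by omega)]

lemma S_mOf (r : ℕ) (G : Finset (Fin k)) (hrk : r ≤ k) :
    ∀ t, t ≤ r → S (mOf r G) t = (G.filter (fun q => xcoordS G q < t)).card := by
  intro t
  induction t with
  | zero =>
    intro _
    rw [S_zero]
    symm
    rw [Finset.card_eq_zero, Finset.filter_eq_empty_iff]
    intro q _; omega
  | succ t ih =>
    intro ht
    have htk : t < k := lt_of_lt_of_le ht hrk
    rw [S_succ _ t htk, ih (by omega)]
    have hm : mOf r G ⟨t, htk⟩ = (G.filter (fun p => xcoordS G p = t)).card := by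
      unfold mOf
      rw [if_pos (show ((⟨t, htk⟩ : Fin k) : ℕ) < r from ht)]
    rw [hm]
    have hsplit : G.filter (fun q => xcoordS G q < t + 1)
        = G.filter (fun p => xcoordS G p = t) ∪ G.filter (fun q => xcoordS G q < t) := by
      ext q
      simp only [Finset.mem_filter, Finset.mem_union]
      constructor
      · rintro ⟨hq, h⟩
        rcases Nat.lt_or_ge (xcoordS G q) t with h' | h'
        · exact Or.inr ⟨hq, h'⟩
        · exact Or.inl ⟨hq, by omega⟩
      · rintro (⟨hq, h⟩ | ⟨hq, h⟩) <;> exact ⟨hq, by omega⟩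
    rw [hsplit, Finset.card_union_of_disjoint ?_]
    rw [Finset.disjoint_left]
    intro q h1 h2
    simp only [Finset.mem_filter] at h1 h2
    omega

lemma subset_phiM_mOf {r : ℕ} (hrk : r ≤ k) (G : Finset (Fin k)) :
    G ⊆ phiM r (mOf r G) := by
  intro q hq
  rw [mem_phiM_iff hrk _ (mOf_supported r G)]
  intro i hi
  have hSn : S (mOf r G) (i + 1) = (G.filter (fun q' => xcoordS G q' < i + 1)).card :=
    S_mOf r G hrk (i + 1) (by omega)
  have hval := val_eq_xcoord G q
  by_cases hc : xcoordS G q < i + 1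
  · have hsub : insert q (G.filter (fun j => j < q)) ⊆
        G.filter (fun q' => xcoordS G q' < i + 1) := by
      intro x hx
      rcases Finset.mem_insert.mp hx with rfl | hx
      · exact Finset.mem_filter.mpr ⟨hq, hc⟩
      · simp only [Finset.mem_filter] at hx ⊢
        refine ⟨hx.1, ?_⟩
        have := xcoord_mono G (le_of_lt hx.2)
        omega
    have hcard := Finset.card_le_card hsub
    rw [Finset.card_insert_of_notMem (by simp)] at hcard
    omega
  · have hsub : G.filter (fun q' => xcoordS G q' < i + 1) ⊆ G.filter (fun j => j < q) := by
      intro x hx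
      simp only [Finset.mem_filter] at hx ⊢
      refine ⟨hx.1, ?_⟩
      by_contra hxq
      have hqx : q ≤ x := le_of_not_gt hxq
      have := xcoord_mono G hqx
      omega
    have hcard := Finset.card_le_card hsub
    omega

lemma S_mOf_le {r : ℕ} (hrk : r ≤ k) (m : Fin k → ℕ) (hs : SupportedOn r m)
    (hd : degM m + r ≤ k) (G : Finset (Fin k)) (hG : G ⊆ phiM r m) :
    ∀ t, t ≤ r → S (mOf r G) t ≤ S m t := by
  intro t ht
  by_contra hlt
  push_neg at hlt
  rcases Nat.eq_zero_or_pos t with rfl | htpos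
  · rw [S_zero m, S_zero (mOf r G)] at hlt; omega
  set A := G.filter (fun q => xcoordS G q < t) with hA
  have hAcard : S (mOf r G) t = A.card := S_mOf r G hrk t ht
  set n := A.card with hn
  have hAbd : ∀ q ∈ A, (q : ℕ) + 2 ≤ n + t := by
    intro q hq
    have hval := val_eq_xcoord G q
    have hqG : q ∈ G := (Finset.mem_filter.mp hq).1
    have hxc : xcoordS G q < t := (Finset.mem_filter.mp hq).2
    have hsub : insert q (G.filter (fun j => j < q)) ⊆ A := by
      intro x hx
      rcases Finset.mem_insert.mp hx with rfl | hx
      · exact hq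
      · simp only [hA, Finset.mem_filter] at hx ⊢
        exact ⟨hx.1, lt_of_le_of_lt (xcoord_mono G (le_of_lt hx.2)) hxc⟩
    have hc := Finset.card_le_card hsub
    rw [Finset.card_insert_of_notMem (by simp)] at hc
    omega
  have hfbd : ∀ j : Fin t, S m ((j : ℕ) + 1) + (j : ℕ) < k := by
    intro j
    have h1 := S_le_deg m ((j : ℕ) + 1)
    have h2 := j.isLt
    omega
  set f : Fin t → Fin k := fun j => ⟨S m ((j : ℕ) + 1) + (j : ℕ), hfbd j⟩ with hf
  have hinj : Function.Injective f := by
    intro i j hij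
    have hij' : ((f i : Fin k) : ℕ) = ((f j : Fin k) : ℕ) := by rw [hij]
    simp only [hf] at hij'
    by_contra hne
    rcases Nat.lt_or_ge (i : ℕ) (j : ℕ) with h | h
    · have := S_mono m (show (i : ℕ) + 1 ≤ (j : ℕ) + 1 by omega); omega
    · have hlt' : (j : ℕ) < (i : ℕ) := by
        rcases Nat.lt_or_ge (j : ℕ) (i : ℕ) with h' | h'
        · exact h'
        · exact absurd (Fin.ext (by omega)) hne
      have := S_mono m (show (j : ℕ) + 1 ≤ (i : ℕ) + 1 by omega); omega
  set E := Finset.univ.image f with hE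
  have hEcard : E.card = t := by
    rw [hE, Finset.card_image_of_injective _ hinj]; simp
  have hdisj : Disjoint A E := by
    rw [Finset.disjoint_left]
    intro q hq hqE
    have hqG : q ∈ G := (Finset.mem_filter.mp hq).1
    have hqphi := hG hqG
    rw [mem_phiM_iff (by omega) m hs] at hqphi
    rw [hE, Finset.mem_image] at hqE
    obtain ⟨j, -, rfl⟩ := hqE
    exact hqphi (j : ℕ) (by omega) rfl
  have hEbd : ∀ q ∈ E, (q : ℕ) + 2 ≤ n + t := by
    intro q hq
    rw [hE, Finset.mem_image] at hq
    obtain ⟨j, -, rfl⟩ := hq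
    have h1 : S m ((j : ℕ) + 1) ≤ S m t := S_mono m (by omega)
    have h2 := j.isLt
    simp only [hf]
    omega
  have hsub : A ∪ E ⊆ Finset.univ.filter (fun p : Fin k => (p : ℕ) < n + t - 1) := by
    intro q hq
    simp only [Finset.mem_filter, Finset.mem_univ, true_and]
    rcases Finset.mem_union.mp hq with h | h
    · have := hAbd q h; omega
    · have := hEbd q h; omega
  have hcard := Finset.card_le_card hsub
  rw [Finset.card_union_of_disjoint hdisj, hEcard] at hcard
  have := card_filter_lt_le (k := k) (n + t - 1)
  omega


lemma S_congr_of (m m' : Fin k → ℕ) (t : ℕ)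
    (h : ∀ x : Fin k, (x : ℕ) < t → m' x = m x) : S m' t = S m t := by
  unfold S
  apply Finset.sum_congr rfl
  intro x hx
  simp only [Finset.mem_filter, Finset.mem_univ, true_and] at hx
  exact h x hx

lemma S_sub_one (m m' : Fin k → ℕ) (t : ℕ) (c : Fin k) (hc : (c : ℕ) < t)
    (hoff : ∀ x : Fin k, (x : ℕ) < t → x ≠ c → m' x = m x) (hcc : m' c + 1 = m c) :
    S m' t + 1 = S m t := by
  unfold S
  have hcmem : c ∈ Finset.univ.filter (fun x : Fin k => (x : ℕ) < t) := by simp [hc]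
  rw [← Finset.add_sum_erase _ m hcmem, ← Finset.add_sum_erase _ m' hcmem]
  have htl : ∑ x ∈ (Finset.univ.filter (fun x : Fin k => (x : ℕ) < t)).erase c, m' x
      = ∑ x ∈ (Finset.univ.filter (fun x : Fin k => (x : ℕ) < t)).erase c, m x := by
    apply Finset.sum_congr rfl
    intro x hx
    have h1 := Finset.mem_erase.mp hx
    have h2 : (x : ℕ) < t := by
      have := h1.2
      simp only [Finset.mem_filter, Finset.mem_univ, true_and] at this
      exact this
    exact hoff x h2 h1.1
  omega

lemma S_shift_eq (m m' : Fin k → ℕ) (t : ℕ) (c d : Fin k) (hc : (c : ℕ) < t)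
    (hd : (d : ℕ) < t) (hcd : c ≠ d)
    (hoff : ∀ x : Fin k, (x : ℕ) < t → x ≠ c → x ≠ d → m' x = m x)
    (hcc : m' c + 1 = m c) (hdd : m' d = m d + 1) : S m' t = S m t := by
  unfold S
  have hcmem : c ∈ Finset.univ.filter (fun x : Fin k => (x : ℕ) < t) := by simp [hc]
  have hdmem : d ∈ (Finset.univ.filter (fun x : Fin k => (x : ℕ) < t)).erase c := by
    rw [Finset.mem_erase]
    exact ⟨fun h => hcd h.symm, by simp [hd]⟩
  rw [← Finset.add_sum_erase _ m hcmem, ← Finset.add_sum_erase _ m' hcmem,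
    ← Finset.add_sum_erase _ m hdmem, ← Finset.add_sum_erase _ m' hdmem]
  have htl : ∑ x ∈ ((Finset.univ.filter (fun x : Fin k => (x : ℕ) < t)).erase c).erase d, m' x
      = ∑ x ∈ ((Finset.univ.filter (fun x : Fin k => (x : ℕ) < t)).erase c).erase d, m x := by
    apply Finset.sum_congr rfl
    intro x hx
    have h1 := Finset.mem_erase.mp hx
    have h2 := Finset.mem_erase.mp h1.2
    have h3 : (x : ℕ) < t := by
      have := h2.2
      simp only [Finset.mem_filter, Finset.mem_univ, true_and] at this
      exact this
    exact hoff x h3 h2.1 h1.1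
  omega

lemma eq_of_S_eq {r : ℕ} (m m₀ : Fin k → ℕ) (hms : SupportedOn r m)
    (h0s : SupportedOn r m₀) (h : ∀ t, t ≤ r → S m₀ t = S m t) : m₀ = m := by
  funext i
  rcases Nat.lt_or_ge (i : ℕ) r with hir | hir
  · have h1 : S m ((i : ℕ) + 1) = m i + S m (i : ℕ) := by
      rw [S_succ m (i : ℕ) i.isLt, Fin.eta]
    have h2 : S m₀ ((i : ℕ) + 1) = m₀ i + S m₀ (i : ℕ) := by
      rw [S_succ m₀ (i : ℕ) i.isLt, Fin.eta]
    have h3 := h ((i : ℕ) + 1) (by omega)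
    have h4 := h (i : ℕ) (by omega)
    omega
  · rw [h0s i hir, hms i hir]

lemma mem_of_S_le {r : ℕ} (hrk : r < k) (M : Set (Fin k → ℕ))
    (hmc : IsMulticx M) (hsh : ShiftedMC r M)
    (m₀ : Fin k → ℕ) (h0s : SupportedOn r m₀)
    (m : Fin k → ℕ) (hm : m ∈ M) (hms : SupportedOn r m)
    (hle : ∀ t, t ≤ r → S m₀ t ≤ S m t) : m₀ ∈ M := by
  classical
  have main : ∀ N (m : Fin k → ℕ), m ∈ M → SupportedOn r m →
      (∑ t ∈ Finset.Icc 1 r, S m t) ≤ N →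
      (∀ t, t ≤ r → S m₀ t ≤ S m t) → m₀ ∈ M := by
    intro N
    induction N with
    | zero =>
      intro m hm hms hmeas hle
      have hz : ∀ t, t ≤ r → S m t = 0 := by
        intro t ht
        rcases Nat.eq_zero_or_pos t with rfl | htpos
        · exact S_zero m
        · have h5 : S m t ≤ ∑ t' ∈ Finset.Icc 1 r, S m t' :=
            Finset.single_le_sum (f := fun t' => S m t')
              (fun _ _ => Nat.zero_le _) (Finset.mem_Icc.mpr ⟨htpos, ht⟩)
          omega
      have heq : m₀ = m := eq_of_S_eq m m₀ hms h0s
        (fun t ht => by have := hle t ht; have := hz t ht; omega)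
      rw [heq]; exact hm
    | succ N ih =>
      intro m hm hms hmeas hle
      by_cases heq : m₀ = m
      · rw [heq]; exact hm
      rcases lt_or_eq_of_le (hle r (le_refl r)) with hdlt | heqd
      · -- phase 1: divide by the last variable present
        have hex : ∃ x : Fin k, m x ≠ 0 := by
          by_contra hno
          push_neg at hno
          have hz : S m r = 0 := by
            unfold S; exact Finset.sum_eq_zero (fun x _ => hno x)
          omega
        set T := Finset.univ.filter (fun x : Fin k => m x ≠ 0) with hT
        have hTne : T.Nonempty := by
          obtain ⟨x, hx⟩ := hex
          exact ⟨x, by simp [hT, hx]⟩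
        set j := T.max' hTne with hjdef
        have hjT : j ∈ T := T.max'_mem hTne
        have hjne : m j ≠ 0 := by
          have := Finset.mem_filter.mp hjT
          exact this.2
        have hjmax : ∀ x : Fin k, m x ≠ 0 → (x : ℕ) ≤ (j : ℕ) := by
          intro x hx
          exact Fin.le_def.mp (T.le_max' x (by simp [hT, hx]))
        have hjr : (j : ℕ) < r := by
          by_contra hc
          exact hjne (hms j (by omega))
        set m'' : Fin k → ℕ := fun x => if x = j then m x - 1 else m x with hm''def
        have hoff : ∀ x : Fin k, x ≠ j → m'' x = m x := by
          intro x hx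
          simp only [hm''def]; rw [if_neg hx]
        have hjj0 : m'' j = m j - 1 := by simp [hm''def]
        have hjj : m'' j + 1 = m j := by omega
        have h''M : m'' ∈ M := by
          apply hmc m hm
          intro x
          by_cases hx : x = j
          · rw [hx]; omega
          · rw [hoff x hx]
        have h''s : SupportedOn r m'' := by
          intro x hx
          have hxj : x ≠ j := by
            intro hxe
            rw [hxe] at hx
            omega
          rw [hoff x hxj]; exact hms x hx
        have hS1 : ∀ t, t ≤ (j : ℕ) → S m'' t = S m t := by
          intro t ht
          apply S_congr_of
          intro x hx
          apply hoff x
          intro hxe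
          rw [hxe] at hx
          omega
        have hS2 : ∀ t, (j : ℕ) < t → S m'' t + 1 = S m t := by
          intro t hjt
          exact S_sub_one m m'' t j hjt (fun x _ hx => hoff x hx) hjj
        have hS3 : ∀ t, (j : ℕ) < t → t ≤ r → S m t = S m r := by
          intro t h1 h2
          unfold S
          apply Finset.sum_subset
          · intro x hx
            simp only [Finset.mem_filter, Finset.mem_univ, true_and] at *
            omega
          · intro x hx1 hx2
            simp only [Finset.mem_filter, Finset.mem_univ, true_and] at hx1 hx2
            by_contra hne
            have := hjmax x hne
            omega
        have hle'' : ∀ t, t ≤ r → S m₀ t ≤ S m'' t := by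
          intro t ht
          rcases le_or_gt t (j : ℕ) with h | h
          · rw [hS1 t h]; exact hle t ht
          · have e2 := hS2 t h
            have e3 := hS3 t h ht
            have e4 : S m₀ t ≤ S m₀ r := S_mono m₀ ht
            omega
        have hlt'' : ∑ t ∈ Finset.Icc 1 r, S m'' t < ∑ t ∈ Finset.Icc 1 r, S m t := by
          apply Finset.sum_lt_sum
          · intro t ht
            rcases le_or_gt t (j : ℕ) with h | h
            · rw [hS1 t h]
            · have := hS2 t h; omega
          · refine ⟨r, Finset.mem_Icc.mpr ⟨by omega, le_refl r⟩, ?_⟩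
            have := hS2 r (by omega)
            omega
        exact ih m'' h''M h''s (by omega) hle''
      · -- phase 2: shifted move
        set T := Finset.univ.filter (fun x : Fin k => m₀ x ≠ m x) with hT
        have hTne : T.Nonempty := by
          by_contra hno
          rw [Finset.not_nonempty_iff_eq_empty, Finset.filter_eq_empty_iff] at hno
          exact heq (funext (fun x => not_not.mp (hno (Finset.mem_univ x))))
        set i := T.min' hTne with hidef
        have hiT : i ∈ T := T.min'_mem hTne
        have hine : m₀ i ≠ m i := (Finset.mem_filter.mp hiT).2
        have heqbelow : ∀ x : Fin k, (x : ℕ) < (i : ℕ) → m₀ x = m x := by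
          intro x hx
          by_contra hne
          have := Fin.le_def.mp (T.min'_le x (by simp [hT, hne]))
          omega
        have hir : (i : ℕ) < r := by
          by_contra hc
          exact hine (by rw [h0s i (by omega), hms i (by omega)])
        have hSi : ∀ t, t ≤ (i : ℕ) → S m₀ t = S m t := by
          intro t ht
          apply S_congr_of
          intro x hx
          exact heqbelow x (by omega)
        have hsm : S m ((i : ℕ) + 1) = m i + S m (i : ℕ) := by
          rw [S_succ m (i : ℕ) i.isLt, Fin.eta]
        have hsm0 : S m₀ ((i : ℕ) + 1) = m₀ i + S m₀ (i : ℕ) := by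
          rw [S_succ m₀ (i : ℕ) i.isLt, Fin.eta]
        have hlei := hle ((i : ℕ) + 1) (by omega)
        have hSieq := hSi (i : ℕ) le_rfl
        have hlt_i : m₀ i < m i := by omega
        have hi1r : (i : ℕ) + 1 < r := by
          by_contra hc
          have hieq : (i : ℕ) + 1 = r := by omega
          rw [← hieq] at heqd
          omega
        set j : Fin k := ⟨(i : ℕ) + 1, by omega⟩ with hjdef
        have hjval : (j : ℕ) = (i : ℕ) + 1 := rfl
        have hij : i < j := by
          rw [Fin.lt_def, hjval]
          omega
        have h''M : shiftMove m i j ∈ M := hsh m hm i j hij (by rw [hjval]; omega) (by omega)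
        set m'' := shiftMove m i j with hm''def
        have hjnei : j ≠ i := by
          intro h
          rw [h] at hij
          exact lt_irrefl _ hij
        have hoffij : ∀ x : Fin k, x ≠ i → x ≠ j → m'' x = m x := by
          intro x h1 h2
          simp only [hm''def, shiftMove]
          rw [if_neg h1, if_neg h2]
        have hii0 : m'' i = m i - 1 := by simp [hm''def, shiftMove]
        have hii : m'' i + 1 = m i := by omega
        have hjj : m'' j = m j + 1 := by simp [hm''def, shiftMove, hjnei]
        have h''s : SupportedOn r m'' := by
          intro x hx
          have h1 : x ≠ i := by
            intro he; rw [he] at hx; omega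
          have h2 : x ≠ j := by
            intro he; rw [he] at hx; rw [hjval] at hx; omega
          rw [hoffij x h1 h2]; exact hms x hx
        have hSa : ∀ t, t ≤ (i : ℕ) → S m'' t = S m t := by
          intro t ht
          apply S_congr_of
          intro x hx
          apply hoffij x
          · intro he; rw [he] at hx; omega
          · intro he; rw [he] at hx; rw [hjval] at hx; omega
        have hSb : S m'' ((i : ℕ) + 1) + 1 = S m ((i : ℕ) + 1) := by
          apply S_sub_one m m'' _ i (by omega) _ hii
          intro x hx hxi
          apply hoffij x hxi
          intro he; rw [he] at hx; rw [hjval] at hx; omega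
        have hSc : ∀ t, (i : ℕ) + 2 ≤ t → S m'' t = S m t := by
          intro t ht
          apply S_shift_eq m m'' t i j (by omega) (by rw [hjval]; omega)
            (fun h => hjnei h.symm) _ hii hjj
          intro x hx h1 h2
          exact hoffij x h1 h2
        have hle'' : ∀ t, t ≤ r → S m₀ t ≤ S m'' t := by
          intro t ht
          rcases le_or_gt t (i : ℕ) with h | h
          · rw [hSa t h]; exact hle t ht
          · by_cases h2 : t = (i : ℕ) + 1
            · rw [h2]; omega
            · rw [hSc t (by omega)]; exact hle t ht
        have hlt'' : ∑ t ∈ Finset.Icc 1 r, S m'' t < ∑ t ∈ Finset.Icc 1 r, S m t := by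
          apply Finset.sum_lt_sum
          · intro t ht
            rcases le_or_gt t (i : ℕ) with h | h
            · rw [hSa t h]
            · by_cases h2 : t = (i : ℕ) + 1
              · rw [h2]; omega
              · rw [hSc t (by omega)]
          · exact ⟨(i : ℕ) + 1, Finset.mem_Icc.mpr ⟨by omega, by omega⟩, by omega⟩
        exact ih m'' h''M h''s (by omega) hle''
  exact main _ m hm hms le_rfl hle

end PhiAux

/-- (Proposition 3.6, second part) `Φ^{a-1}(C^a_{r+1} M)` is the
`(a-2)`-skeleton of `Φ^a(M)`, i.e. the set of faces of `Φ^a(M)` of cardinality `≤ a - 1`. -/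
theorem phiCplx_cone_eq_skeleton (r a : ℕ) (ha : 2 ≤ a)
    (M : Set (Fin (r + a) → ℕ)) (hne : M.Nonempty)
    (hsupp : ∀ m ∈ M, SupportedOn r m ∧ degM m ≤ a)
    (hmc : IsMulticx M) (hsh : ShiftedMC r M) :
    PhiCplx (r + 1) (coneMC r a M) = {G ∈ PhiCplx r M | G.card ≤ a - 1} := by
  classical
  ext G
  simp only [PhiCplx, coneMC, Set.mem_setOf_eq, Set.mem_sep_iff]
  constructor
  · rintro ⟨p, ⟨m, hm, ℓ, hdl, rfl⟩, hGp⟩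
    obtain ⟨hs, hd⟩ := hsupp m hm
    have hGp' : G ⊆ phiM (r + 1) (PhiAux.coneMon r m ℓ) := hGp
    have hGm : G ⊆ phiM r m := by
      intro q hq
      exact ((PhiAux.mem_phiM_cone_iff (by omega) m hs ℓ q).mp (hGp' hq)).1
    refine ⟨⟨m, hm, hGm⟩, ?_⟩
    have hcard : (phiM (r + 1) (PhiAux.coneMon r m ℓ)).card = (r + a) - (r + 1) :=
      PhiAux.card_phiM (PhiAux.coneMon r m ℓ) (PhiAux.coneMon_supported m hs ℓ)
        (by rw [PhiAux.degM_coneMon (by omega) m hs]; omega)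
    have hle := Finset.card_le_card hGp'
    omega
  · rintro ⟨⟨m, hm, hGm⟩, hcard⟩
    obtain ⟨hs, hd⟩ := hsupp m hm
    set m₀ := PhiAux.mOf r G with hm₀
    have h0s : SupportedOn r m₀ := PhiAux.mOf_supported r G
    have hGm₀ : G ⊆ phiM r m₀ := PhiAux.subset_phiM_mOf (by omega) G
    have hSle : ∀ t, t ≤ r → PhiAux.S m₀ t ≤ PhiAux.S m t :=
      PhiAux.S_mOf_le (by omega) m hs (by omega) G hGm
    have hm₀M : m₀ ∈ M := PhiAux.mem_of_S_le (by omega) M hmc hsh m₀ h0s m hm hs hSle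
    set D := degM m₀ with hD
    have hDr : PhiAux.S m₀ r = D := PhiAux.S_eq_deg h0s le_rfl
    have hDcard : D = (G.filter (fun q => xcoordS G q < r)).card := by
      rw [← hDr, PhiAux.S_mOf r G (by omega) r le_rfl]
    set T := G.filter (fun q => r ≤ xcoordS G q) with hT
    have hTeq : T = G.filter (fun q => ¬ xcoordS G q < r) := by
      apply Finset.filter_congr
      intro q _
      omega
    have hsplit : D + T.card = G.card := by
      rw [hDcard, hTeq]
      exact Finset.card_filter_add_card_filter_not (p := fun q => xcoordS G q < r)
    set I := Finset.univ.filter (fun p : Fin (r + a) => r + D ≤ (p : ℕ)) with hI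
    have hIcard : I.card = a - D := by
      have hIeq : I = Finset.univ.filter (fun p : Fin (r + a) => ¬ (p : ℕ) < r + D) := by
        apply Finset.filter_congr
        intro q _
        omega
      have h1 := Finset.card_filter_add_card_filter_not
        (s := (Finset.univ : Finset (Fin (r + a)))) (p := fun p : Fin (r + a) => (p : ℕ) < r + D)
      have h2 : (Finset.univ.filter (fun p : Fin (r + a) => (p : ℕ) < r + D)).card = r + D :=
        PhiAux.card_filter_lt (by omega)
      have h3 : (Finset.univ : Finset (Fin (r + a))).card = r + a := by simp
      rw [hIeq]
      omega
    have hTsub : T ⊆ I := by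
      intro q hq
      rw [hT, Finset.mem_filter] at hq
      rw [hI, Finset.mem_filter]
      refine ⟨Finset.mem_univ q, ?_⟩
      have hval := PhiAux.val_eq_xcoord G q
      have hsub2 : G.filter (fun q' => xcoordS G q' < r) ⊆ G.filter (fun j => j < q) := by
        intro y hy
        rw [Finset.mem_filter] at hy ⊢
        refine ⟨hy.1, ?_⟩
        by_contra hxq
        have := PhiAux.xcoord_mono G (le_of_not_gt hxq)
        omega
      have := Finset.card_le_card hsub2
      omega
    have hTIcard : T.card < I.card := by omega
    have hex : ∃ x ∈ I, x ∉ T := by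
      by_contra hno
      push_neg at hno
      exact absurd (Finset.card_le_card hno) (by omega)
    obtain ⟨x, hxI, hxT⟩ := hex
    rw [hI, Finset.mem_filter] at hxI
    have hxG : x ∉ G := by
      intro hxg
      apply hxT
      rw [hT, Finset.mem_filter]
      refine ⟨hxg, ?_⟩
      by_contra hlt
      push_neg at hlt
      have hval := PhiAux.val_eq_xcoord G x
      have hsub2 : insert x (G.filter (fun j => j < x)) ⊆
          G.filter (fun q' => xcoordS G q' < r) := by
        intro y hy
        rcases Finset.mem_insert.mp hy with rfl | hy
        · exact Finset.mem_filter.mpr ⟨hxg, hlt⟩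
        · rw [Finset.mem_filter] at hy ⊢
          exact ⟨hy.1, lt_of_le_of_lt (PhiAux.xcoord_mono G (le_of_lt hy.2)) hlt⟩
      have hcc := Finset.card_le_card hsub2
      rw [Finset.card_insert_of_notMem (by simp)] at hcc
      omega
    set ℓ := (x : ℕ) - (r + D) with hℓ
    have hxval : (x : ℕ) = D + ℓ + r := by omega
    have hdl : degM m₀ + ℓ < a := by
      have := x.isLt
      omega
    refine ⟨PhiAux.coneMon r m₀ ℓ, ⟨m₀, hm₀M, ℓ, hdl, rfl⟩, ?_⟩
    intro q hq
    rw [PhiAux.mem_phiM_cone_iff (by omega) m₀ h0s ℓ q]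
    refine ⟨hGm₀ hq, ?_⟩
    intro hqv
    apply hxG
    have hqx : q = x := Fin.ext (by omega)
    rw [← hqx]
    exact hq
end
end

section
/- For an integer vector h = (h_0, h_1, …, h_d) and integers n ≥ d ≥ 1: h is the h-vector of a pure shifted simplicial complex of dimension d−1 on [n] if and only if h is the f-vector of a shifted multicomplex on W_{n−d} = {w_1,…,w_{n−d}} consisting of monomials of degree at most d (i.e. f_i of the multicomplex equals h_i for 0 ≤ i ≤ d). -/
open Finset

noncomputable section

/-!
Read a `d`-subset `F` of `[n]` as a lattice path from `(0, 0)` to `(n - d, d)` whose north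
steps sit at the positions in `F`. The monomial `psiM (n - d) F` records how many north steps
lie in each of the columns `0, …, n - d - 1` (the last column is forgotten), and this is a
bijection onto the monomials of degree `≤ d` in `w_1, …, w_{n-d}`; the degree of `ψ(F)` is
`|F \ σ(F)|`. Replacing `r ∈ F` by `r + 1 ∉ F` moves one north step one column to the right,
i.e. moves a unit of exponent from `w_i` to `w_{i+1}`, or deletes it when it reaches the last
column. Since every shift of a set is a composite of such elementary shifts, `ψ` identifies
shifted families of `d`-sets with shifted multicomplexes of degree `≤ d`.

On the other side, the complex generated by a shifted family of `d`-sets is partitioned into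
the intervals `[F \ σ(F), F]`, so its `h`-vector counts the facets `F` by `|F \ σ(F)|`, which
is the `f`-vector of the corresponding multicomplex.
-/

section LatticePath

variable {n : ℕ}

def northCol (F : Finset (Fin n)) (i : ℕ) : Finset (Fin n) :=
  F.filter (fun p => xcoordS F p = i)

lemma psiM_apply (r : ℕ) (F : Finset (Fin n)) (i : Fin n) :
    psiM r F i = if (i : ℕ) < r then #(northCol F i) else 0 := rfl

lemma xcoordS_add_card_filter_lt (F : Finset (Fin n)) (p : Fin n) :
    xcoordS F p + #(F.filter (· < p)) = p := by
  have h₁ : univ.filter (fun j => j < p ∧ j ∉ F) = (Iio p).filter (· ∉ F) := by ext; simp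
  have h₂ : F.filter (· < p) = (Iio p).filter (· ∈ F) := by ext; simp [and_comm]
  rw [xcoordS, h₁, h₂, add_comm, card_filter_add_card_filter_not, Fin.card_Iio]

lemma xcoordS_congr {F G : Finset (Fin n)} {p : Fin n} (h : ∀ j < p, j ∈ F ↔ j ∈ G) :
    xcoordS F p = xcoordS G p := by
  unfold xcoordS
  congr 1
  ext j
  simp only [mem_filter, mem_univ, true_and, and_congr_right_iff]
  exact fun hj => not_congr (h j hj)

lemma xcoordS_mono (F : Finset (Fin n)) : Monotone (xcoordS F) := fun p q hpq => by
  apply card_le_card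
  intro j
  simp only [mem_filter, mem_univ, true_and]
  exact fun hj => ⟨hj.1.trans_le hpq, hj.2⟩

lemma xcoordS_lt_of_notMem {F : Finset (Fin n)} {p q : Fin n} (hp : p ∉ F) (hpq : p < q) :
    xcoordS F p < xcoordS F q := by
  apply card_lt_card
  rw [ssubset_iff_of_subset]
  · exact ⟨p, by simp [hp, hpq], by simp⟩
  · intro j
    simp only [mem_filter, mem_univ, true_and]
    exact fun hj => ⟨hj.1.trans hpq, hj.2⟩

lemma card_compl_fin (F : Finset (Fin n)) : #Fᶜ = n - #F := by
  rw [card_compl, Fintype.card_fin]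

lemma xcoordS_le_sub_card (F : Finset (Fin n)) (p : Fin n) : xcoordS F p ≤ n - #F := by
  rw [← card_compl_fin]
  apply card_le_card
  intro j
  simp only [mem_filter, mem_univ, true_and, mem_compl]
  exact And.right

lemma xcoordS_lt_sub_card {F : Finset (Fin n)} {s : Fin n} (hs : s ∉ F) :
    xcoordS F s < n - #F := by
  rw [← card_compl_fin]
  apply card_lt_card
  rw [ssubset_iff_of_subset]
  · exact ⟨s, by simp [hs], by simp⟩
  · intro j
    simp only [mem_filter, mem_univ, true_and, mem_compl]
    exact And.right

lemma xcoordS_eq_sub_card_iff {F : Finset (Fin n)} {p : Fin n} :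
    xcoordS F p = n - #F ↔ ∀ l, p ≤ l → l ∈ F := by
  constructor
  · intro h l hpl
    by_contra hl
    have := (xcoordS_mono F hpl).trans_lt (xcoordS_lt_sub_card hl)
    omega
  · intro h
    rw [← card_compl_fin, xcoordS]
    congr 1
    ext j
    simp only [mem_filter, mem_univ, true_and, mem_compl, and_iff_right_iff_imp]
    exact fun hj => lt_of_not_ge fun hpj => hj (h j hpj)

lemma sigmaSeg_eq_northCol (F : Finset (Fin n)) : sigmaSeg F = northCol F (n - #F) := by
  ext p
  simp only [sigmaSeg, northCol, mem_filter, mem_univ, true_and, xcoordS_eq_sub_card_iff]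
  exact ⟨fun h => ⟨h p le_rfl, h⟩, And.right⟩

lemma sigmaSeg_subset (F : Finset (Fin n)) : sigmaSeg F ⊆ F := by
  rw [sigmaSeg_eq_northCol]
  exact filter_subset _ _

lemma xcoordS_succ_of_mem {F : Finset (Fin n)} {r s : Fin n} (hr : r ∈ F)
    (hs : (s : ℕ) = r + 1) : xcoordS F s = xcoordS F r := by
  unfold xcoordS
  congr 1
  ext j
  simp only [mem_filter, mem_univ, true_and, Fin.lt_def, hs, and_congr_left_iff]
  intro hj
  have : (j : ℕ) ≠ r := fun h => hj (Fin.ext h ▸ hr)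
  omega

lemma xcoordS_succ_of_notMem {F : Finset (Fin n)} {r s : Fin n} (hr : r ∉ F)
    (hs : (s : ℕ) = r + 1) : xcoordS F s = xcoordS F r + 1 := by
  unfold xcoordS
  rw [← card_insert_of_notMem (s := univ.filter _) (a := r) (by simp)]
  congr 1
  ext j
  simp only [mem_filter, mem_univ, true_and, mem_insert, Fin.lt_def, hs, Fin.ext_iff]
  constructor
  · rintro ⟨hj, hjF⟩
    rcases Nat.lt_succ_iff_lt_or_eq.1 hj with h | h
    · exact Or.inr ⟨h, hjF⟩
    · exact Or.inl h
  · rintro (h | ⟨h, hjF⟩)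
    · exact ⟨by omega, Fin.ext h ▸ hr⟩
    · exact ⟨by omega, hjF⟩

section Swap

variable {F : Finset (Fin n)} {r s : Fin n}

lemma card_filter_lt_swap (hr : r ∈ F) (hs : s ∉ F) {q : Fin n} (hq : r < q ↔ s < q) :
    #((insert s (F.erase r)).filter (· < q)) = #(F.filter (· < q)) := by
  rw [filter_insert, filter_erase]
  by_cases hsq : s < q
  · have hrq : r ∈ F.filter (· < q) := mem_filter.2 ⟨hr, hq.2 hsq⟩
    rw [if_pos hsq, card_insert_of_notMem (by simp [hs]), card_erase_of_mem hrq]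
    have := card_pos.2 ⟨r, hrq⟩
    omega
  · rw [if_neg hsq, erase_eq_of_notMem (by simp [hq, hsq])]

lemma card_swap (hr : r ∈ F) (hs : s ∉ F) : #(insert s (F.erase r)) = #F := by
  rw [card_insert_of_notMem (fun h => hs (mem_of_mem_erase h)), card_erase_add_one hr]

lemma xcoordS_swap_of_ne (hr : r ∈ F) (hs : s ∉ F) (hrs : (s : ℕ) = r + 1) {q : Fin n}
    (hq : q ≠ s) :
    xcoordS (insert s (F.erase r)) q = xcoordS F q := by
  have hF := xcoordS_add_card_filter_lt F q
  have hF' := xcoordS_add_card_filter_lt (insert s (F.erase r)) q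
  have := Fin.val_ne_of_ne hq
  rw [card_filter_lt_swap hr hs (by rw [Fin.lt_def, Fin.lt_def]; omega)] at hF'
  omega

lemma xcoordS_swap_self (hr : r ∈ F) (hs : s ∉ F) (hrs : (s : ℕ) = r + 1) :
    xcoordS (insert s (F.erase r)) s = xcoordS F r + 1 := by
  have hr' : r ∉ insert s (F.erase r) := by
    simp only [mem_insert, mem_erase, not_or]
    exact ⟨fun h => by rw [h] at hrs; omega, by simp⟩
  rw [xcoordS_succ_of_notMem hr' hrs,
    xcoordS_swap_of_ne hr hs hrs fun h => by rw [h] at hrs; omega]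

lemma card_northCol_swap (hr : r ∈ F) (hs : s ∉ F) (hrs : (s : ℕ) = r + 1) (i : ℕ) :
    #(northCol (insert s (F.erase r)) i) + (if xcoordS F r = i then 1 else 0) =
      #(northCol F i) + (if xcoordS F r + 1 = i then 1 else 0) := by
  simp only [northCol, card_filter]
  rw [sum_insert (fun h => hs (mem_of_mem_erase h)), xcoordS_swap_self hr hs hrs,
    ← add_sum_erase F _ hr,
    sum_congr rfl fun q hq => by
      rw [xcoordS_swap_of_ne hr hs hrs (fun h => hs (h ▸ mem_of_mem_erase hq))]]
  ring

end Swap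

end LatticePath

section Psi

variable {n : ℕ}

lemma exists_swap_of_northCol_nonempty {F : Finset (Fin n)} {i : ℕ}
    (hcol : (northCol F i).Nonempty) (hi : i < n - #F) :
    ∃ r s : Fin n, r ∈ F ∧ s ∉ F ∧ (s : ℕ) = r + 1 ∧ xcoordS F r = i := by
  set r := (northCol F i).max' hcol
  obtain ⟨hrF, hrx⟩ : r ∈ F ∧ xcoordS F r = i := mem_filter.1 (max'_mem _ hcol)
  obtain ⟨l, hrl, hl⟩ : ∃ l, r ≤ l ∧ l ∉ F := by
    by_contra! h
    have := xcoordS_eq_sub_card_iff.2 h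
    omega
  have hrn : (r : ℕ) + 1 < n := by
    have := Fin.val_ne_of_ne (show r ≠ l from fun h => hl (h ▸ hrF))
    have := l.isLt
    rw [Fin.le_def] at hrl
    omega
  refine ⟨r, ⟨r + 1, hrn⟩, hrF, fun hs => ?_, rfl, hrx⟩
  have hmem : (⟨r + 1, hrn⟩ : Fin n) ∈ northCol F i :=
    mem_filter.2 ⟨hs, (xcoordS_succ_of_mem hrF rfl).trans hrx⟩
  have := le_max' _ _ hmem
  rw [Fin.le_def] at this
  exact absurd this (by simp [r])

lemma northCol_nonempty_of_psiM_pos {R : ℕ} {F : Finset (Fin n)} {i : Fin n}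
    (h : 0 < psiM R F i) : (northCol F i).Nonempty ∧ (i : ℕ) < R := by
  rw [psiM_apply] at h
  split_ifs at h with hi
  · exact ⟨card_pos.1 h, hi⟩
  · exact absurd h (lt_irrefl 0)

section Swap

variable {F : Finset (Fin n)} {r s a : Fin n} {R : ℕ}

lemma psiM_swap_eq_shiftMove (hr : r ∈ F) (hs : s ∉ F) (hrs : (s : ℕ) = r + 1)
    (ha : (a : ℕ) = xcoordS F r) {b : Fin n} (hb : (b : ℕ) = a + 1) (hbR : (b : ℕ) < R) :
    psiM R (insert s (F.erase r)) = shiftMove (psiM R F) a b := by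
  have hpos : 0 < #(northCol F a) := card_pos.2 ⟨r, mem_filter.2 ⟨hr, ha.symm⟩⟩
  have hab : a ≠ b := fun h => by rw [h] at ha; omega
  funext i
  have key := card_northCol_swap hr hs hrs i
  rcases eq_or_ne i a with rfl | hia
  · rw [if_pos ha.symm, if_neg (by omega)] at key
    simp only [shiftMove, if_pos, psiM_apply, if_pos (show (i : ℕ) < R by omega)]
    omega
  rcases eq_or_ne i b with rfl | hib
  · rw [if_neg (by omega), if_pos (by omega)] at key
    simp only [shiftMove, hia, hbR, if_false, if_true, psiM_apply]
    omega
  · rw [if_neg (fun h => hia (Fin.ext (by omega))), if_neg (fun h => hib (Fin.ext (by omega)))]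
      at key
    simp only [shiftMove, hia, hib, if_false, psiM_apply]
    split_ifs <;> omega

lemma psiM_swap_eq_update (hr : r ∈ F) (hs : s ∉ F) (hrs : (s : ℕ) = r + 1)
    (ha : (a : ℕ) = xcoordS F r) (haR : (a : ℕ) + 1 = R) :
    psiM R (insert s (F.erase r)) = Function.update (psiM R F) a (psiM R F a - 1) := by
  funext i
  have key := card_northCol_swap hr hs hrs i
  rcases eq_or_ne i a with rfl | hia
  · rw [if_pos ha.symm, if_neg (by omega)] at key
    simp only [Function.update_self, psiM_apply, if_pos (show (i : ℕ) < R by omega)]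
    omega
  · rw [if_neg (fun h => hia (Fin.ext (by omega)))] at key
    simp only [Function.update_of_ne hia, psiM_apply]
    split_ifs with hiR
    · rw [if_neg (by omega)] at key
      omega
    · rfl

end Swap

lemma card_eq_sum_card_northCol (F : Finset (Fin n)) :
    #F = ∑ i ∈ range (n - #F + 1), #(northCol F i) :=
  card_eq_sum_card_fiberwise fun p _ => mem_range.2 (Nat.lt_succ_of_le (xcoordS_le_sub_card F p))

lemma northCol_eq_empty {F : Finset (Fin n)} {i : ℕ} (hi : n - #F < i) : northCol F i = ∅ :=
  filter_eq_empty_iff.2 fun p _ => ((xcoordS_le_sub_card F p).trans_lt hi).ne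

lemma degM_psiM_eq_sum {R : ℕ} (hR : R ≤ n) (F : Finset (Fin n)) :
    degM (psiM R F) = ∑ i ∈ range R, #(northCol F i) := by
  let f : ℕ → ℕ := fun k => if k < R then #(northCol F k) else 0
  rw [degM, show ∑ i, psiM R F i = ∑ i : Fin n, f i from rfl, Fin.sum_univ_eq_sum_range f n,
    ← sum_filter]
  congr 1
  ext i
  simp only [mem_filter, mem_range]
  omega

lemma degM_psiM {d : ℕ} {F : Finset (Fin n)} (hF : #F = d) :
    degM (psiM (n - d) F) = #(F \ sigmaSeg F) := by
  have hsum := card_eq_sum_card_northCol F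
  rw [sum_range_succ, ← sigmaSeg_eq_northCol, hF] at hsum
  rw [degM_psiM_eq_sum (Nat.sub_le n d), card_sdiff_of_subset (sigmaSeg_subset F)]
  omega

lemma card_northCol_lt {F G : Finset (Fin n)} {p : Fin n} (hpF : p ∈ F) (hpG : p ∉ G)
    (hagree : ∀ j < p, j ∈ F ↔ j ∈ G) :
    #(northCol G (xcoordS F p)) < #(northCol F (xcoordS F p)) := by
  apply card_lt_card
  rw [ssubset_iff_of_subset]
  · exact ⟨p, mem_filter.2 ⟨hpF, rfl⟩, fun h => hpG (mem_filter.1 h).1⟩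
  intro q hq
  obtain ⟨hqG, hqx⟩ := mem_filter.1 hq
  rcases lt_trichotomy q p with hqp | rfl | hpq
  · refine mem_filter.2 ⟨(hagree q hqp).2 hqG, ?_⟩
    rw [xcoordS_congr fun j hj => hagree j (hj.trans hqp), hqx]
  · exact absurd hqG hpG
  · have := xcoordS_lt_of_notMem hpG hpq
    rw [← xcoordS_congr hagree] at this
    omega

lemma eq_of_card_northCol_eq {F G : Finset (Fin n)}
    (h : ∀ i, #(northCol F i) = #(northCol G i)) : F = G := by
  by_contra hne
  have hne' : (F \ G ∪ G \ F).Nonempty := by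
    rw [nonempty_iff_ne_empty, Ne, union_eq_empty, sdiff_eq_empty_iff_subset,
      sdiff_eq_empty_iff_subset]
    exact fun h => hne (Subset.antisymm h.1 h.2)
  set p := (F \ G ∪ G \ F).min' hne'
  have hagree : ∀ j < p, j ∈ F ↔ j ∈ G := by
    intro j hj
    by_contra hc
    exact absurd (min'_le _ j (by simp only [mem_union, mem_sdiff]; tauto)) (not_le.2 hj)
  rcases mem_union.1 (min'_mem _ hne') with hp | hp
  · exact (card_northCol_lt (mem_sdiff.1 hp).1 (mem_sdiff.1 hp).2 hagree).ne (h _).symm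
  · exact (card_northCol_lt (mem_sdiff.1 hp).1 (mem_sdiff.1 hp).2
      fun j hj => (hagree j hj).symm).ne (h _)

lemma psiM_injOn (d : ℕ) : Set.InjOn (psiM (n - d)) {F : Finset (Fin n) | #F = d} := by
  intro F hF G hG hFG
  have hlt : ∀ i < n - d, #(northCol F i) = #(northCol G i) := fun i hi => by
    simpa [psiM_apply, hi] using congrFun hFG ⟨i, by omega⟩
  apply eq_of_card_northCol_eq
  intro i
  rcases lt_trichotomy i (n - d) with hi | hi | hi
  · exact hlt i hi
  · have hF' := card_eq_sum_card_northCol F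
    have hG' := card_eq_sum_card_northCol G
    rw [hF, sum_range_succ, sum_congr rfl fun i hi => hlt i (mem_range.1 hi)] at hF'
    rw [hG, sum_range_succ] at hG'
    rw [hi]
    omega
  · rw [northCol_eq_empty (by rwa [hF]), northCol_eq_empty (by rwa [hG])]

lemma psiM_Iio {R : ℕ} (hR : 0 < R) (c i₀ : Fin n) (hi₀ : (i₀ : ℕ) = 0) :
    psiM R (Iio c) = Pi.single i₀ (c : ℕ) := by
  have hx : ∀ p ∈ Iio c, xcoordS (Iio c) p = 0 := fun p hp =>
    card_eq_zero.2 <| filter_eq_empty_iff.2 fun j _ h =>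
      h.2 (mem_Iio.2 (h.1.trans (mem_Iio.1 hp)))
  funext i
  rw [psiM_apply]
  rcases eq_or_ne i i₀ with rfl | hi
  · rw [if_pos (by omega), Pi.single_eq_same, northCol, hi₀, filter_true_of_mem hx, Fin.card_Iio]
  · rw [Pi.single_eq_of_ne hi]
    split_ifs
    · exact card_eq_zero.2 <| filter_eq_empty_iff.2 fun p hp => by
        rw [hx p hp]
        exact fun h => hi (Fin.ext (by omega))
    · rfl

end Psi

section Monomial

variable {k : ℕ}

lemma shiftMove_shiftMove {m : Fin k → ℕ} {i c j : Fin k} (hic : i ≠ c) (hcj : c ≠ j)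
    (hij : i ≠ j) : shiftMove (shiftMove m i c) c j = shiftMove m i j := by
  funext t
  simp only [shiftMove]
  split_ifs <;> simp_all

lemma shiftMove_shiftMove_self {m : Fin k → ℕ} {i j : Fin k} (hij : i ≠ j) (hi : 0 < m i) :
    shiftMove (shiftMove m i j) j i = m := by
  funext t
  simp only [shiftMove]
  split_ifs <;> subst_vars <;> simp_all [Nat.sub_add_cancel hi]

lemma degM_shiftMove {m : Fin k → ℕ} {i j : Fin k} (hij : i ≠ j) (hi : 0 < m i) :
    degM (shiftMove m i j) = degM m := by
  have key : ∀ t, (shiftMove m i j t : ℤ) =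
      m t - (if t = i then 1 else 0) + (if t = j then 1 else 0) := by
    intro t
    simp only [shiftMove]
    split_ifs <;> subst_vars <;> simp_all
  zify
  simp only [degM, Nat.cast_sum, key, sum_add_distrib, sum_sub_distrib, sum_ite_eq', mem_univ,
    if_true]
  ring

lemma degM_lt_degM {m m' : Fin k → ℕ} (hle : ∀ t, m' t ≤ m t) {i : Fin k}
    (hi : m' i < m i) : degM m' < degM m :=
  sum_lt_sum (fun t _ => hle t) ⟨i, mem_univ i, hi⟩

lemma update_pred_le (m : Fin k → ℕ) (a t : Fin k) :
    Function.update m a (m a - 1) t ≤ m t := by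
  rcases eq_or_ne t a with rfl | ht
  · simp
  · simp [ht]

variable {M : Set (Fin k → ℕ)}

lemma isMulticx_of_forall_update_pred_mem
    (hM : ∀ m ∈ M, ∀ i, 0 < m i → Function.update m i (m i - 1) ∈ M) : IsMulticx M := by
  intro m hm m' hle
  induction hN : degM m using Nat.strong_induction_on generalizing m with
  | _ N ih =>
  by_cases heq : m' = m
  · exact heq ▸ hm
  obtain ⟨i, hi⟩ : ∃ i, m' i < m i := by
    by_contra! h
    exact heq (funext fun t => le_antisymm (hle t) (h t))
  have hle' : ∀ t, m' t ≤ Function.update m i (m i - 1) t := by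
    intro t
    rcases eq_or_ne t i with rfl | ht
    · simp only [Function.update_self]
      omega
    · simp only [Function.update_of_ne ht, hle t]
  have hlt : degM (Function.update m i (m i - 1)) < N :=
    hN ▸ degM_lt_degM (update_pred_le m i) (i := i) (by simp; omega)
  exact ih _ hlt _ (hM m hm i (by omega)) hle' rfl

lemma shiftedMC_of_forall_succ {R : ℕ}
    (hM : ∀ m ∈ M, ∀ i j : Fin k, (j : ℕ) = i + 1 → (j : ℕ) < R → 0 < m i →
      shiftMove m i j ∈ M) : ShiftedMC R M := by
  intro m hm i j hij hjR hpos
  rw [Fin.lt_def] at hij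
  obtain ⟨g, hg⟩ : ∃ g, (j : ℕ) = i + 1 + g := ⟨j - i - 1, by omega⟩
  induction g generalizing m i with
  | zero => exact hM m hm i j hg hjR hpos
  | succ g ih =>
    set c : Fin k := ⟨i + 1, by omega⟩
    have hic : i ≠ c := fun h => by simpa [c] using congrArg Fin.val h
    have hcj : c ≠ j := fun h => by simp [c, Fin.ext_iff] at h; omega
    have hc : 0 < shiftMove m i c c := by simp [shiftMove, hic.symm]
    rw [← shiftMove_shiftMove hic hcj (fun h => by rw [h] at hg; omega)]
    exact ih _ (hM m hm i c rfl (by simp [c]; omega) hpos) c (by simp [c]; omega) hc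
      (by simp [c]; omega)

lemma update_pred_mem_of_shiftedMC {R : ℕ} (hR : R ≤ k) (hS : ShiftedMC R M)
    (hsupp : ∀ m ∈ M, SupportedOn R m)
    (hlast : ∀ m ∈ M, ∀ i : Fin k, (i : ℕ) + 1 = R → 0 < m i →
      Function.update m i (m i - 1) ∈ M)
    {m : Fin k → ℕ} (hm : m ∈ M) {i : Fin k} (hi : 0 < m i) :
    Function.update m i (m i - 1) ∈ M := by
  have hiR : (i : ℕ) < R := by
    by_contra h
    exact hi.ne' (hsupp m hm i (not_lt.1 h))
  -- Shift the unit to the last variable, then drop it there.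
  set l : Fin k := ⟨R - 1, by omega⟩
  by_cases hil : i = l
  · exact hlast m hm i (by simp [hil, l]; omega) hi
  have hil' : (i : ℕ) < l := by
    have := Fin.val_ne_of_ne hil
    simp only [l] at this ⊢
    omega
  have hl : 0 < shiftMove m i l l := by simp [shiftMove, Ne.symm hil]
  have := hlast _ (hS m hm i l hil' (by simp [l]; omega) hi) l (by simp [l]; omega) hl
  convert this using 1
  funext t
  by_cases hti : t = i
  · subst hti
    simp [shiftMove, hil]
  by_cases htl : t = l
  · subst htl
    simp [shiftMove, Ne.symm hil]
  · simp [shiftMove, hti, htl]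

lemma add_le_degM (m : Fin k → ℕ) {i j : Fin k} (hij : i ≠ j) : m i + m j ≤ degM m := by
  rw [← sum_pair hij]
  exact sum_le_sum_of_subset (subset_univ _)

lemma mem_of_single_mem_of_shiftedMC {R : ℕ} (hM : IsMulticx M) (hS : ShiftedMC R M)
    {i₀ : Fin k} (hi₀ : (i₀ : ℕ) = 0) {d : ℕ} (hd : Pi.single i₀ d ∈ M)
    {m : Fin k → ℕ} (hsupp : SupportedOn R m) (hdeg : degM m ≤ d) : m ∈ M := by
  induction hN : degM m - m i₀ generalizing m with
  | zero =>
    refine hM _ hd m fun t => ?_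
    rcases eq_or_ne t i₀ with rfl | ht
    · simpa using (single_le_sum (fun _ _ => Nat.zero_le _) (mem_univ t)).trans hdeg
    · have := add_le_degM m ht.symm
      rw [Pi.single_eq_of_ne ht]
      omega
  | succ N ih =>
    obtain ⟨j, hj, hpos⟩ : ∃ j ≠ i₀, 0 < m j := by
      by_contra! h
      rw [degM, sum_eq_single i₀ (fun t _ ht => Nat.le_zero.1 (h t ht)) (by simp)] at hN
      omega
    have hjR : (j : ℕ) < R := by
      by_contra h
      exact hpos.ne' (hsupp j (not_lt.1 h))
    have hm' : shiftMove m j i₀ ∈ M := by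
      refine ih (fun t ht => ?_) ((degM_shiftMove hj hpos).trans_le hdeg) ?_
      · simp only [shiftMove]
        split_ifs with h₁ h₂
        · omega
        · omega
        · exact hsupp t ht
      · rw [degM_shiftMove hj hpos]
        simp only [shiftMove, if_neg hj.symm, if_true]
        omega
    rw [← shiftMove_shiftMove_self hj hpos]
    exact hS _ hm' i₀ j (by rw [Fin.lt_def]; have := Fin.val_ne_of_ne hj; omega) hjR
      (by simp [shiftMove, hj.symm])

end Monomial

section Correspondence

variable {n d : ℕ}

lemma shiftedCplx_of_forall_succ {Δ : Set (Finset (Fin n))}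
    (h : ∀ F ∈ Δ, ∀ r s : Fin n, (s : ℕ) = r + 1 → r ∈ F → s ∉ F →
      insert s (F.erase r) ∈ Δ) :
    ShiftedCplx Δ := by
  intro F hF r s hrs hr hs
  rw [Fin.lt_def] at hrs
  -- `r ↦ s` is `r ↦ r + 1` followed by `r + 1 ↦ s`, or the other way round if `r + 1 ∈ F`.
  obtain ⟨g, hg⟩ : ∃ g, (s : ℕ) = r + 1 + g := ⟨s - r - 1, by omega⟩
  induction g generalizing F r with
  | zero => exact h F hF r s hg hr hs
  | succ g ih =>
    set c : Fin n := ⟨r + 1, by omega⟩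
    have hrc : r ≠ c := fun h => by simpa [c] using congrArg Fin.val h
    have hcs : c ≠ s := fun h => by simp [c, Fin.ext_iff] at h; omega
    have hcs' : c < s := by rw [Fin.lt_def]; simp [c]; omega
    by_cases hc : c ∈ F
    · have h₁ := ih F hF c hcs' hc hs (by simp [c]; omega)
      have h₂ := h _ h₁ r c rfl (mem_insert_of_mem (mem_erase.2 ⟨hrc, hr⟩)) (by simp [hcs])
      convert h₂ using 1
      ext t
      simp only [mem_insert, mem_erase]
      grind
    · have h₁ := h F hF r c rfl hr hc
      have h₂ := ih _ h₁ c hcs' (mem_insert_self _ _)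
        (by simp [hcs.symm, hs]) (by simp [c]; omega)
      rwa [erase_insert fun h => hc (mem_of_mem_erase h)] at h₂

lemma supportedOn_psiM (R : ℕ) (F : Finset (Fin n)) : SupportedOn R (psiM R F) :=
  fun _ hi => if_neg (not_lt.2 hi)

lemma exists_swap_of_psiM_pos {F : Finset (Fin n)} (hF : #F = d) {a : Fin n}
    (ha : 0 < psiM (n - d) F a) :
    ∃ r s : Fin n, r ∈ F ∧ s ∉ F ∧ (s : ℕ) = r + 1 ∧ (a : ℕ) = xcoordS F r := by
  obtain ⟨hcol, haR⟩ := northCol_nonempty_of_psiM_pos ha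
  obtain ⟨r, s, hr, hs, hrs, hx⟩ := exists_swap_of_northCol_nonempty hcol (by rwa [hF])
  exact ⟨r, s, hr, hs, hrs, hx.symm⟩

theorem shiftedMC_image_psiM {𝒰 : Set (Finset (Fin n))} (hcard : ∀ F ∈ 𝒰, #F = d)
    (hsh : ShiftedCplx 𝒰) : ShiftedMC (n - d) (psiM (n - d) '' 𝒰) := by
  apply shiftedMC_of_forall_succ
  rintro _ ⟨F, hF, rfl⟩ a b hab hbR hpos
  obtain ⟨r, s, hr, hs, hrs, ha⟩ := exists_swap_of_psiM_pos (hcard F hF) hpos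
  exact ⟨_, hsh F hF r s (by rw [Fin.lt_def]; omega) hr hs,
    psiM_swap_eq_shiftMove hr hs hrs ha hab hbR⟩

theorem isMulticx_image_psiM {𝒰 : Set (Finset (Fin n))} (hcard : ∀ F ∈ 𝒰, #F = d)
    (hsh : ShiftedCplx 𝒰) : IsMulticx (psiM (n - d) '' 𝒰) := by
  refine isMulticx_of_forall_update_pred_mem fun m hm i hi =>
    update_pred_mem_of_shiftedMC (Nat.sub_le n d) (shiftedMC_image_psiM hcard hsh) ?_ ?_ hm hi
  · rintro _ ⟨F, -, rfl⟩
    exact supportedOn_psiM _ F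
  · rintro _ ⟨F, hF, rfl⟩ a haR hpos
    obtain ⟨r, s, hr, hs, hrs, ha⟩ := exists_swap_of_psiM_pos (hcard F hF) hpos
    exact ⟨_, hsh F hF r s (by rw [Fin.lt_def]; omega) hr hs,
      psiM_swap_eq_update hr hs hrs ha haR⟩

theorem shiftedCplx_preimage_psiM {M : Set (Fin n → ℕ)} (hM : IsMulticx M)
    (hS : ShiftedMC (n - d) M) :
    ShiftedCplx {F : Finset (Fin n) | #F = d ∧ psiM (n - d) F ∈ M} := by
  apply shiftedCplx_of_forall_succ
  rintro F ⟨hF, hFM⟩ r s hrs hr hs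
  refine ⟨(card_swap hr hs).trans hF, ?_⟩
  have hx : xcoordS F r < n - d := by
    rw [← hF, ← xcoordS_succ_of_mem hr hrs]
    exact xcoordS_lt_sub_card hs
  set a : Fin n := ⟨xcoordS F r, by omega⟩
  have hpos : 0 < psiM (n - d) F a := by
    rw [psiM_apply, if_pos hx]
    exact card_pos.2 ⟨r, mem_filter.2 ⟨hr, rfl⟩⟩
  rcases (Nat.succ_le_of_lt hx).lt_or_eq with hlt | heq
  · rw [psiM_swap_eq_shiftMove (a := a) (b := ⟨xcoordS F r + 1, by omega⟩) hr hs hrs rfl rfl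
      hlt]
    exact hS _ hFM a _ (by rw [Fin.lt_def]; simp [a]) hlt hpos
  · rw [psiM_swap_eq_update (a := a) hr hs hrs rfl heq]
    exact hM _ hFM _ (update_pred_le _ a)

theorem exists_psiM_eq (hdn : d ≤ n) {m : Fin n → ℕ} (hm : SupportedOn (n - d) m)
    (hdeg : degM m ≤ d) : ∃ F : Finset (Fin n), #F = d ∧ psiM (n - d) F = m := by
  rcases Nat.eq_zero_or_pos (n - d) with hR | hR
  · obtain ⟨F, -, hF⟩ := exists_subset_card_eq (s := (univ : Finset (Fin n)))
      (by simpa using hdn)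
    refine ⟨F, hF, funext fun i => ?_⟩
    rw [psiM_apply, if_neg (by omega), hm i (by omega)]
  · -- `ψ` of all `d`-sets is a shifted multicomplex containing `ψ {0, …, d - 1} = w₁ ^ d`.
    have hsh : ShiftedCplx {F : Finset (Fin n) | #F = d} := fun F hF r s _ hr hs =>
      (card_swap hr hs).trans hF
    have hsingle : Pi.single (⟨0, by omega⟩ : Fin n) d ∈ psiM (n - d) '' {F | #F = d} :=
      ⟨Iio ⟨d, by omega⟩, Fin.card_Iio _, psiM_Iio hR _ _ rfl⟩
    exact mem_of_single_mem_of_shiftedMC (isMulticx_image_psiM (fun _ hF => hF) hsh)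
      (shiftedMC_image_psiM (fun _ hF => hF) hsh) rfl hsingle hm hdeg

lemma ncard_psiM_image {𝒰 : Set (Finset (Fin n))} (hcard : ∀ F ∈ 𝒰, #F = d) (i : ℕ) :
    {m ∈ psiM (n - d) '' 𝒰 | degM m = i}.ncard =
      {F ∈ 𝒰 | #(F \ sigmaSeg F) = i}.ncard := by
  have : {m ∈ psiM (n - d) '' 𝒰 | degM m = i} =
      psiM (n - d) '' {F ∈ 𝒰 | #(F \ sigmaSeg F) = i} := by
    ext m
    simp only [Set.mem_ofPred_eq, Set.mem_image]
    constructor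
    · rintro ⟨⟨F, hF, rfl⟩, hi⟩
      exact ⟨F, ⟨hF, degM_psiM (hcard F hF) ▸ hi⟩, rfl⟩
    · rintro ⟨F, ⟨hF, hi⟩, rfl⟩
      exact ⟨⟨F, hF, rfl⟩, (degM_psiM (hcard F hF)).trans hi⟩
  rw [this, Set.InjOn.ncard_image ((psiM_injOn d).mono fun F hF => hcard F hF.1)]

end Correspondence

section HVector

lemma card_filter_card_Icc {α : Type*} [DecidableEq α] {A B : Finset α} (h : A ⊆ B) (i : ℕ) :
    #((Icc A B).filter (#· = i)) = if #A ≤ i then (#B - #A).choose (i - #A) else 0 := by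
  have hdisj : ∀ T ∈ (B \ A).powerset, Disjoint A T := fun T hT =>
    disjoint_of_subset_right (mem_powerset.1 hT) disjoint_sdiff
  rw [Icc_eq_image_powerset h, filter_image, card_image_of_injOn]
  · split_ifs with hi
    · rw [← card_sdiff_of_subset h, ← card_powersetCard, powersetCard_eq_filter]
      refine congrArg card (filter_congr fun T hT => ?_)
      rw [card_union_of_disjoint (hdisj T hT)]
      omega
    · refine card_eq_zero.2 (filter_eq_empty_iff.2 fun T _ h' => hi ?_)
      exact h' ▸ card_le_card subset_union_left
  · intro T hT T' hT' hTT'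
    rw [← union_sdiff_cancel_left (hdisj T (mem_of_mem_filter _ hT)),
      ← union_sdiff_cancel_left (hdisj T' (mem_of_mem_filter _ hT'))]
    exact congrArg (· \ A) hTT'

lemma sum_neg_one_pow_mul_choose {b : ℕ} :
    ∑ k ∈ range (b + 1), (-1 : ℤ) ^ (b - k) * b.choose k = if b = 0 then 1 else 0 := by
  have hsign : ∀ k ∈ range (b + 1), (-1 : ℤ) ^ (b - k) * b.choose k =
      (-1) ^ b * ((-1) ^ k * b.choose k) := by
    intro k hk
    have hk : k ≤ b := Nat.lt_succ_iff.1 (mem_range.1 hk)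
    rw [← mul_assoc, ← pow_add, show b + k = b - k + 2 * k by omega, pow_add, pow_mul]
    simp
  rw [sum_congr rfl hsign, ← mul_sum, Int.alternating_sum_range_choose]
  split_ifs with hb <;> simp [hb]

lemma sum_neg_one_pow_mul_choose_mul_choose (d r j : ℕ) :
    ∑ i ∈ range (j + 1), (-1 : ℤ) ^ (j - i) * ((d - i).choose (j - i) : ℕ) *
      ((if r ≤ i then (d - r).choose (i - r) else 0 : ℕ) : ℤ) = if r = j then 1 else 0 := by
  rcases lt_or_ge j r with hjr | hrj
  · rw [if_neg hjr.ne', sum_eq_zero fun i hi => by simp [show ¬ r ≤ i by simp at hi; omega]]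
  rw [show j + 1 = r + (j - r + 1) by omega, sum_range_add,
    sum_eq_zero fun i hi => by simp [show ¬ r ≤ i by simp at hi; omega], zero_add]
  have hterm : ∀ k ∈ range (j - r + 1), (-1 : ℤ) ^ (j - (r + k)) *
      ((d - (r + k)).choose (j - (r + k)) : ℕ) *
      ((if r ≤ r + k then (d - r).choose (r + k - r) else 0 : ℕ) : ℤ) =
      (d - r).choose (j - r) * ((-1) ^ (j - r - k) * (j - r).choose k) := by
    intro k hk
    have hk : k ≤ j - r := by simp at hk; omega
    rw [if_pos (Nat.le_add_right r k), Nat.add_sub_cancel_left,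
      show d - (r + k) = d - r - k by omega, show j - (r + k) = j - r - k by omega]
    have h : ((d - r - k).choose (j - r - k) : ℤ) * (d - r).choose k =
        (d - r).choose (j - r) * (j - r).choose k := by
      exact_mod_cast ((Nat.choose_mul hk).trans (mul_comm _ _)).symm
    linear_combination (-1 : ℤ) ^ (j - r - k) * h
  rw [sum_congr rfl hterm, ← mul_sum, sum_neg_one_pow_mul_choose]
  split_ifs <;> first | omega | simp_all

variable {n : ℕ}

theorem hvec_eq_card_filter_of_partition {d j : ℕ} {Δ : Set (Finset (Fin n))}
    {U : Finset (Finset (Fin n))} {ρ : Finset (Fin n) → Finset (Fin n)}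
    (hcard : ∀ F ∈ U, #F = d) (hρ : ∀ F ∈ U, ρ F ⊆ F)
    (hΔ : Δ = ↑(U.biUnion fun F => Icc (ρ F) F))
    (hdisj : (U : Set (Finset (Fin n))).PairwiseDisjoint fun F => Icc (ρ F) F) :
    hvec d Δ j = #(U.filter fun F => #(ρ F) = j) := by
  -- Each interval `[ρ F, F]` contributes `y ^ #(ρ F)` to the `h`-polynomial.
  have hf : ∀ i, (fvec Δ i : ℤ) = ∑ F ∈ U,
      ((if #(ρ F) ≤ i then (d - #(ρ F)).choose (i - #(ρ F)) else 0 : ℕ) : ℤ) := by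
    intro i
    have hset : {G ∈ Δ | #G = i} = ↑((U.biUnion fun F => Icc (ρ F) F).filter (#· = i)) := by
      ext
      simp [hΔ, and_left_comm]
    rw [fvec, hset, Set.ncard_coe_finset, filter_biUnion,
      card_biUnion fun F hF F' hF' hne => disjoint_filter_filter (hdisj hF hF' hne)]
    rw [Nat.cast_sum]
    refine sum_congr rfl fun F hF => ?_
    rw [card_filter_card_Icc (hρ F hF), hcard F hF]
  simp only [hvec, hf, mul_sum]
  rw [sum_comm, card_filter, Nat.cast_sum]
  refine sum_congr rfl fun F hF => ?_
  rw [sum_neg_one_pow_mul_choose_mul_choose]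
  simp

end HVector

section ShiftedComplex

lemma eq_of_upward_closed_of_card_eq {α : Type*} [LinearOrder α] {C A B : Finset α}
    (hA : A ⊆ C) (hB : B ⊆ C) (hA' : ∀ a ∈ A, ∀ c ∈ C, a ≤ c → c ∈ A)
    (hB' : ∀ b ∈ B, ∀ c ∈ C, b ≤ c → c ∈ B) (h : #A = #B) : A = B := by
  suffices A ⊆ B ∨ B ⊆ A by
    rcases this with hAB | hBA
    · exact eq_of_subset_of_card_le hAB h.ge
    · exact (eq_of_subset_of_card_le hBA h.le).symm
  by_contra! hc
  obtain ⟨a, ha, haB⟩ := not_subset.1 hc.1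
  obtain ⟨b, hb, hbA⟩ := not_subset.1 hc.2
  rcases le_total a b with hab | hba
  · exact hbA (hA' a ha b (hB hb) hab)
  · exact haB (hB' b hb a (hA ha) hba)

variable {n : ℕ}

lemma mem_sigmaSeg {F : Finset (Fin n)} {p : Fin n} :
    p ∈ sigmaSeg F ↔ ∀ l, p ≤ l → l ∈ F := by
  simp [sigmaSeg]

lemma eq_of_mem_Icc_sdiff_sigmaSeg {F F' G : Finset (Fin n)} (hcard : #F = #F')
    (h : G ∈ Icc (F \ sigmaSeg F) F) (h' : G ∈ Icc (F' \ sigmaSeg F') F') : F = F' := by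
  -- `F \ G` and `F' \ G` are upward closed in `Gᶜ` and have the same size.
  have hup : ∀ H : Finset (Fin n), G ∈ Icc (H \ sigmaSeg H) H →
      ∀ a ∈ H \ G, ∀ c ∈ Gᶜ, a ≤ c → c ∈ H \ G := by
    intro H hH a ha c hc hac
    obtain ⟨haH, haG⟩ := mem_sdiff.1 ha
    have ha' : a ∈ sigmaSeg H := by
      by_contra hσ
      exact haG ((mem_Icc.1 hH).1 (mem_sdiff.2 ⟨haH, hσ⟩))
    exact mem_sdiff.2 ⟨mem_sigmaSeg.1 ha' c hac, mem_compl.1 hc⟩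
  have hsub : ∀ H : Finset (Fin n), H \ G ⊆ Gᶜ := fun H x hx => mem_compl.2 (mem_sdiff.1 hx).2
  have key : F \ G = F' \ G :=
    eq_of_upward_closed_of_card_eq (hsub F) (hsub F') (hup F h) (hup F' h') (by
      rw [card_sdiff_of_subset (mem_Icc.1 h).2, card_sdiff_of_subset (mem_Icc.1 h').2, hcard])
  rw [← union_sdiff_of_subset (mem_Icc.1 h).2, key, union_sdiff_of_subset (mem_Icc.1 h').2]

lemma exists_mem_Icc_sdiff_sigmaSeg {𝒰 : Set (Finset (Fin n))} (hsh : ShiftedCplx 𝒰)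
    {G F₀ : Finset (Fin n)} (hF₀ : F₀ ∈ 𝒰) (hG : G ⊆ F₀) :
    ∃ F ∈ 𝒰, G ∈ Icc (F \ sigmaSeg F) F := by
  -- Maximize `∑ p ∈ F, p`: an element of `F \ σ(F)` outside `G` could still be shifted up.
  obtain ⟨F, ⟨hF, hGF⟩, hmax⟩ := Set.exists_max_image {F | F ∈ 𝒰 ∧ G ⊆ F}
    (fun F => ∑ p ∈ F, (p : ℕ)) (Set.toFinite _) ⟨F₀, hF₀, hG⟩
  refine ⟨F, hF, mem_Icc.2 ⟨fun r hr => ?_, hGF⟩⟩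
  by_contra hrG
  obtain ⟨hrF, hrσ⟩ := mem_sdiff.1 hr
  obtain ⟨s, hrs, hs⟩ : ∃ s, r ≤ s ∧ s ∉ F := by simpa [mem_sigmaSeg] using hrσ
  have hrs' : r < s := lt_of_le_of_ne hrs fun h => hs (h ▸ hrF)
  have hsum := hmax _ ⟨hsh F hF r s hrs' hrF hs,
    fun x hx => mem_insert_of_mem (mem_erase.2 ⟨fun h => hrG (h ▸ hx), hGF hx⟩)⟩
  rw [sum_insert fun h => hs (mem_of_mem_erase h), ← add_sum_erase F _ hrF] at hsum
  rw [Fin.lt_def] at hrs'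
  omega

theorem hvec_lowerClosure {d j : ℕ} {𝒰 : Set (Finset (Fin n))} (hcard : ∀ F ∈ 𝒰, #F = d)
    (hsh : ShiftedCplx 𝒰) :
    hvec d (lowerClosure 𝒰 : Set (Finset (Fin n))) j =
      ({F ∈ 𝒰 | #(F \ sigmaSeg F) = j}.ncard : ℤ) := by
  set U := (Set.toFinite 𝒰).toFinset
  have hU : ∀ F, F ∈ U ↔ F ∈ 𝒰 := fun F => Set.Finite.mem_toFinset _
  rw [hvec_eq_card_filter_of_partition (U := U) (ρ := fun F => F \ sigmaSeg F)
    (fun F hF => hcard F ((hU F).1 hF)) (fun F _ => sdiff_subset) ?_ ?_]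
  · rw [← Set.ncard_coe_finset]
    congr 2
    ext F
    simp [hU]
  · ext G
    simp only [SetLike.mem_coe, mem_lowerClosure, coe_biUnion, Set.mem_iUnion, hU, exists_prop]
    constructor
    · rintro ⟨F, hF, hGF⟩
      exact exists_mem_Icc_sdiff_sigmaSeg hsh hF hGF
    · rintro ⟨F, hF, hG⟩
      exact ⟨F, hF, (mem_Icc.1 hG).2⟩
  · intro F hF F' hF' hne
    refine disjoint_left.2 fun G hG hG' => hne (eq_of_mem_Icc_sdiff_sigmaSeg ?_ hG hG')
    rw [hcard F ((hU F).1 hF), hcard F' ((hU F').1 hF')]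

lemma isCplx_lowerClosure (𝒰 : Set (Finset (Fin n))) :
    IsCplx (lowerClosure 𝒰 : Set (Finset (Fin n))) :=
  fun _ hF _ hGF => (lowerClosure 𝒰).lower hGF hF

lemma shiftedCplx_lowerClosure {𝒰 : Set (Finset (Fin n))} (hsh : ShiftedCplx 𝒰) :
    ShiftedCplx (lowerClosure 𝒰 : Set (Finset (Fin n))) := by
  rintro G hG r s hrs hr hs
  obtain ⟨F, hF, hGF⟩ := mem_lowerClosure.1 hG
  rw [SetLike.mem_coe, mem_lowerClosure]
  by_cases hsF : s ∈ F
  · exact ⟨F, hF, insert_subset hsF ((erase_subset r G).trans hGF)⟩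
  · exact ⟨_, hsh F hF r s hrs (hGF hr) hsF, insert_subset_insert s (erase_subset_erase r hGF)⟩

lemma card_eq_of_isFacet_lowerClosure {d : ℕ} {𝒰 : Set (Finset (Fin n))}
    (hcard : ∀ F ∈ 𝒰, #F = d) {F : Finset (Fin n)}
    (hF : IsFacet (lowerClosure 𝒰 : Set (Finset (Fin n))) F) : #F = d := by
  obtain ⟨F', hF', hFF'⟩ := mem_lowerClosure.1 hF.1
  rw [hF.2 F' (subset_lowerClosure hF') hFF']
  exact hcard F' hF'

lemma eq_lowerClosure_of_isFacet {d : ℕ} {Δ : Set (Finset (Fin n))} (hΔ : IsCplx Δ)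
    (hpure : ∀ F, IsFacet Δ F → #F = d) : Δ = lowerClosure {F | F ∈ Δ ∧ #F = d} := by
  ext G
  rw [SetLike.mem_coe, mem_lowerClosure]
  constructor
  · intro hG
    obtain ⟨F, ⟨hF, hGF⟩, hmax⟩ := Set.exists_max_image {F | F ∈ Δ ∧ G ⊆ F} card
      (Set.toFinite _) ⟨G, hG, subset_rfl⟩
    refine ⟨F, ⟨hF, hpure F ⟨hF, fun H hH hFH => ?_⟩⟩, hGF⟩
    exact eq_of_subset_of_card_le hFH (hmax H ⟨hH, hGF.trans hFH⟩)
  · rintro ⟨F, ⟨hF, -⟩, hGF⟩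
    exact hΔ F hF G hGF

lemma image_psiM_preimage {d : ℕ} (hdn : d ≤ n) {M : Set (Fin n → ℕ)}
    (hMd : ∀ m ∈ M, SupportedOn (n - d) m ∧ degM m ≤ d) :
    psiM (n - d) '' {F | #F = d ∧ psiM (n - d) F ∈ M} = M := by
  ext m
  constructor
  · rintro ⟨F, ⟨-, hF⟩, rfl⟩
    exact hF
  · intro hm
    obtain ⟨F, hF, hFm⟩ := exists_psiM_eq hdn (hMd m hm).1 (hMd m hm).2
    exact ⟨F, ⟨hF, hFm ▸ hm⟩, hFm⟩

end ShiftedComplex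

theorem hvector_pure_shifted_iff_fvector_shifted_multicomplex_general
    (n d : ℕ) (hdn : d ≤ n) (h : ℕ → ℤ) :
    (∃ Δ : Set (Finset (Fin n)), IsCplx Δ ∧ ShiftedCplx Δ ∧
      (∀ F, IsFacet Δ F → F.card = d) ∧ (∃ F ∈ Δ, F.card = d) ∧
      ∀ i ≤ d, hvec d Δ i = h i) ↔
    (∃ M : Set (Fin n → ℕ), M.Nonempty ∧
      (∀ m ∈ M, SupportedOn (n - d) m ∧ degM m ≤ d) ∧ IsMulticx M ∧ ShiftedMC (n - d) M ∧
      ∀ i ≤ d, ({m ∈ M | degM m = i}.ncard : ℤ) = h i) := by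
  constructor
  · rintro ⟨Δ, hΔ, hsh, hpure, ⟨F₀, hF₀, hF₀d⟩, hh⟩
    set 𝒰 := {F | F ∈ Δ ∧ #F = d}
    have hcard : ∀ F ∈ 𝒰, #F = d := fun F hF => hF.2
    have h𝒰 : ShiftedCplx 𝒰 := fun F hF r s hrs hr hs =>
      ⟨hsh F hF.1 r s hrs hr hs, (card_swap hr hs).trans hF.2⟩
    refine ⟨psiM (n - d) '' 𝒰, ⟨_, F₀, ⟨hF₀, hF₀d⟩, rfl⟩, ?_,
      isMulticx_image_psiM hcard h𝒰, shiftedMC_image_psiM hcard h𝒰, fun i hi => ?_⟩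
    · rintro _ ⟨F, hF, rfl⟩
      exact ⟨supportedOn_psiM _ F,
        (degM_psiM hF.2).trans_le ((card_le_card sdiff_subset).trans hF.2.le)⟩
    · rw [ncard_psiM_image hcard, ← hvec_lowerClosure hcard h𝒰,
        ← eq_lowerClosure_of_isFacet hΔ hpure, hh i hi]
  · rintro ⟨M, ⟨m₀, hm₀⟩, hMd, hM, hS, hh⟩
    set 𝒰 := {F : Finset (Fin n) | #F = d ∧ psiM (n - d) F ∈ M}
    have hcard : ∀ F ∈ 𝒰, #F = d := fun F hF => hF.1
    have h𝒰 : ShiftedCplx 𝒰 := shiftedCplx_preimage_psiM hM hS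
    obtain ⟨F₀, hF₀, hF₀m⟩ := exists_psiM_eq hdn (hMd m₀ hm₀).1 (hMd m₀ hm₀).2
    refine ⟨lowerClosure 𝒰, isCplx_lowerClosure 𝒰, shiftedCplx_lowerClosure h𝒰,
      fun F hF => card_eq_of_isFacet_lowerClosure hcard hF,
      ⟨F₀, subset_lowerClosure ⟨hF₀, hF₀m ▸ hm₀⟩, hF₀⟩, fun i hi => ?_⟩
    rw [hvec_lowerClosure hcard h𝒰, ← ncard_psiM_image hcard, image_psiM_preimage hdn hMd,
      hh i hi]

/-- (Theorem 2.1, (b) ⇔ (d)) An integer vector `(h_0,…,h_d)` is the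
`h`-vector of a pure shifted `(d-1)`-complex on `[n]` iff it is the `f`-vector of a shifted
multicomplex on `W_{n-d}` of degree `≤ d`. -/
theorem hvector_pure_shifted_iff_fvector_shifted_multicomplex
    (n d : ℕ) (hd : 1 ≤ d) (hdn : d ≤ n) (h : ℕ → ℤ) :
    (∃ Δ : Set (Finset (Fin n)), IsCplx Δ ∧ ShiftedCplx Δ ∧
      (∀ F, IsFacet Δ F → F.card = d) ∧ (∃ F ∈ Δ, F.card = d) ∧
      ∀ i ≤ d, hvec d Δ i = h i) ↔
    (∃ M : Set (Fin n → ℕ), M.Nonempty ∧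
      (∀ m ∈ M, SupportedOn (n - d) m ∧ degM m ≤ d) ∧ IsMulticx M ∧ ShiftedMC (n - d) M ∧
      ∀ i ≤ d, ({m ∈ M | degM m = i}.ncard : ℤ) = h i) :=
  hvector_pure_shifted_iff_fvector_shifted_multicomplex_general n d hdn h
end
end
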